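/- arXiv:1801.06269 — 7 statements merged into one kernel-verified Lean document; each statement's English description precedes it below -/
import Mathlib

section
/- Let G be a finite group and D a collection of subgroups of G. For each K ∈ D, the map φ_K : B(G,D) → ℤ induced by [G/H] ↦ |{x ∈ G/H : kx = x for all k ∈ K}| is a ring homomorphism, and the combined map φ = (φ_K) : B(G,D) → ∏_{(K)∈D^c} ℤ, indexed by conjugacy classes of subgroups in D, is an injective ring homomorphism. -/
open MulAction

/-- The conjugate `g H g⁻¹` of a subgroup `H` by `g`. -/
def conjSub {G : Type*} [Group G] (g : G) (H : Subgroup G) : Subgroup G :=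
  Subgroup.map (MulAut.conj g).toMonoidHom H

/-- A collection of subgroups of `G`: contains `G`, closed under intersection and conjugation. -/
def IsCollection {G : Type*} [Group G] (D : Set (Subgroup G)) : Prop :=
  ⊤ ∈ D ∧ (∀ H ∈ D, ∀ K ∈ D, H ⊓ K ∈ D) ∧ (∀ H ∈ D, ∀ g : G, conjSub g H ∈ D)

/-- The mark vector of the transitive `G`-set `G ⧸ H`: its value at a subgroup `K` is the
number of `K`-fixed points of `G ⧸ H`.  We realize the Burnside ring inside the ring of
functions `Subgroup G → ℤ` via marks. -/
noncomputable def mark (G : Type*) [Group G] (H : Subgroup G) : Subgroup G → ℤ :=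
  fun K => (Nat.card (fixedPoints K (G ⧸ H)) : ℤ)

/-- The partial Burnside ring of `G` relative to a family `D` of subgroups, realized as the
subring of `Subgroup G → ℤ` generated by the marks of the transitive `G`-sets `G ⧸ H`, `H ∈ D`. -/
noncomputable def pbr (G : Type*) [Group G] (D : Set (Subgroup G)) : Subring (Subgroup G → ℤ) :=
  Subring.closure { f | ∃ H ∈ D, f = mark G H }

section Aux

variable {G : Type*} [Group G]

lemma mem_fp_iff (K : Subgroup G) {X : Type*} [MulAction G X] (x : X) :
    x ∈ fixedPoints K X ↔ K ≤ stabilizer G x := by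
  simp [mem_fixedPoints, SetLike.le_def, mem_stabilizer_iff, Subtype.forall, Subgroup.smul_def]

lemma stab_coset (H : Subgroup G) (g : G) :
    stabilizer G ((g : G ⧸ H)) = conjSub g H := by
  have h1 : ((g : G ⧸ H)) = g • ((1 : G) : G ⧸ H) := by simp
  rw [h1, stabilizer_smul_eq_stabilizer_map_conj, stabilizer_quotient]; rfl

lemma fp_conj_iff {X : Type*} [MulAction G X] (g : G) (K : Subgroup G) (x : X) :
    x ∈ fixedPoints (conjSub g K) X ↔ g⁻¹ • x ∈ fixedPoints K X := by
  rw [mem_fp_iff, mem_fp_iff]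
  have hiff : ∀ k : G, ((g * k * g⁻¹) • x = x ↔ k • (g⁻¹ • x) = g⁻¹ • x) := by
    intro k
    constructor
    · intro h
      have h2 := congrArg (g⁻¹ • ·) h
      simpa [smul_smul, mul_assoc] using h2
    · intro h
      have h2 := congrArg (g • ·) h
      simpa [smul_smul, mul_assoc] using h2
  simp only [SetLike.le_def, mem_stabilizer_iff]
  constructor
  · intro h k hk
    refine (hiff k).mp (h ?_)
    exact Subgroup.mem_map.mpr ⟨k, hk, rfl⟩
  · intro h y hy
    obtain ⟨k, hk, rfl⟩ := Subgroup.mem_map.mp hy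
    exact (hiff k).mpr (h hk)

lemma mark_conj (H : Subgroup G) (g : G) (K : Subgroup G) :
    mark G H (conjSub g K) = mark G H K := by
  unfold mark
  congr 1
  exact Nat.card_congr (Equiv.subtypeEquiv (MulAction.toPerm (g⁻¹ : G))
    (fun x => fp_conj_iff g K x))

/-- The smallest member of `D` containing `L`. -/
noncomputable def hull (D : Set (Subgroup G)) (L : Subgroup G) : Subgroup G :=
  sInf {H | H ∈ D ∧ L ≤ H}

variable [Finite G]

lemma sInf_mem_of_finite {α : Type*} [CompleteLattice α] {S : Set α} (hfin : S.Finite)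
    (hne : S.Nonempty) (hcl : ∀ x ∈ S, ∀ y ∈ S, x ⊓ y ∈ S) : sInf S ∈ S := by
  obtain ⟨m, hm, hmin⟩ := Set.Finite.exists_minimalFor id S hfin hne
  have hle : ∀ x ∈ S, m ≤ x := by
    intro x hx
    have h1 : m ⊓ x ∈ S := hcl m hm x hx
    have h2 : m = m ⊓ x := le_antisymm (hmin h1 inf_le_left) inf_le_left
    rw [h2]; exact inf_le_right
  have : sInf S = m := le_antisymm (sInf_le hm) (le_sInf hle)
  rw [this]; exact hm

lemma hull_mem {D : Set (Subgroup G)} (hD : IsCollection D) (L : Subgroup G) :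
    hull D L ∈ D ∧ L ≤ hull D L := by
  have key : hull D L ∈ {H | H ∈ D ∧ L ≤ H} := by
    refine sInf_mem_of_finite (Set.toFinite _) ⟨⊤, hD.1, le_top⟩ ?_
    rintro x ⟨hx, hLx⟩ y ⟨hy, hLy⟩
    exact ⟨hD.2.1 x hx y hy, le_inf hLx hLy⟩
  exact ⟨key.1, key.2⟩

lemma hull_le_iff {D : Set (Subgroup G)} (hD : IsCollection D) (L : Subgroup G)
    {M : Subgroup G} (hM : M ∈ D) : hull D L ≤ M ↔ L ≤ M := by
  constructor
  · exact fun h => (hull_mem hD L).2.trans h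
  · intro h
    exact sInf_le ⟨hM, h⟩

lemma mark_hull {D : Set (Subgroup G)} (hD : IsCollection D) {H : Subgroup G} (hH : H ∈ D)
    (L : Subgroup G) : mark G H L = mark G H (hull D L) := by
  have hset : fixedPoints L (G ⧸ H) = fixedPoints (hull D L) (G ⧸ H) := by
    ext x
    induction x using QuotientGroup.induction_on with
    | H g =>
      show (↑g : G ⧸ H) ∈ fixedPoints L (G ⧸ H) ↔
        (↑g : G ⧸ H) ∈ fixedPoints (hull D L) (G ⧸ H)
      erw [mem_fp_iff, mem_fp_iff]
      rw [stab_coset,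
        ← hull_le_iff hD L (hD.2.2 H hH g)]
  unfold mark
  rw [hset]

end Aux


/-- For a finite group `G` and a collection `D` of subgroups of `G`:
(1) for each `K ∈ D`, evaluation of marks at `K` (counting `K`-fixed points) is a ring
homomorphism `B(G,D) → ℤ`;
(2) marks of elements of `B(G,D)` are constant on conjugacy classes of subgroups in `D`
(so the Burnside homomorphism is indexed by the conjugacy classes `D^c`);
(3) the combined Burnside homomorphism is injective. -/
theorem burnside_hom {G : Type*} [Group G] [Finite G] (D : Set (Subgroup G))
    (hD : IsCollection D) :
    (∀ K ∈ D, ∃ φK : pbr G D →+* ℤ, ∀ x : pbr G D, φK x = (x : Subgroup G → ℤ) K) ∧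
    (∀ x : pbr G D, ∀ K ∈ D, ∀ g : G,
      (x : Subgroup G → ℤ) (conjSub g K) = (x : Subgroup G → ℤ) K) ∧
    (∀ x y : pbr G D,
      (∀ K ∈ D, (x : Subgroup G → ℤ) K = (y : Subgroup G → ℤ) K) → x = y) := by
  refine ⟨fun K _ => ⟨(Pi.evalRingHom (fun _ => ℤ) K).comp (pbr G D).subtype,
    fun x => rfl⟩, ?_, ?_⟩
  · -- conjugation invariance
    have key : ∀ f ∈ pbr G D, ∀ K : Subgroup G, ∀ g : G, f (conjSub g K) = f K := by
      intro f hf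
      induction hf using Subring.closure_induction with
      | mem x hx =>
        obtain ⟨H, _, rfl⟩ := hx
        exact fun K g => mark_conj H g K
      | zero => simp
      | one => simp
      | add x y hx hy ihx ihy => intro K g; simp [ihx K g, ihy K g]
      | neg x hx ihx => intro K g; simp [ihx K g]
      | mul x y hx hy ihx ihy => intro K g; simp [ihx K g, ihy K g]
    exact fun x K _ g => key x x.2 K g
  · -- injectivity
    have key : ∀ f ∈ pbr G D, ∀ L : Subgroup G, f L = f (hull D L) := by
      intro f hf
      induction hf using Subring.closure_induction with
      | mem x hx =>
        obtain ⟨H, hH, rfl⟩ := hx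
        exact fun L => mark_hull hD hH L
      | zero => simp
      | one => simp
      | add x y hx hy ihx ihy => intro L; simp [ihx L, ihy L]
      | neg x hx ihx => intro L; simp [ihx L]
      | mul x y hx hy ihx ihy => intro L; simp [ihx L, ihy L]
    intro x y h
    refine Subtype.ext (funext fun L => ?_)
    rw [key x x.2 L, key y y.2 L, h (hull D L) (hull_mem hD L).1]
end

section
/- Let G₁, G₂ be finite groups with collections D₁, D₂ respectively. Then the map induced by (X₁, X₂) ↦ X₁ × X₂ gives a ring isomorphism B(G₁,D₁) ⊗_ℤ B(G₂,D₂) ≅ B(G₁ × G₂, D₁ × D₂), sending [G₁/H₁] ⊗ [G₂/H₂] to [(G₁×G₂)/(H₁×H₂)]. -/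
set_option maxHeartbeats 1000000
set_option synthInstance.maxHeartbeats 400000

open MulAction

open scoped TensorProduct

/-- The product collection `{H₁ × H₂ : H₁ ∈ D₁, H₂ ∈ D₂}` of subgroups of `G₁ × G₂`. -/
def prodCollection {G₁ G₂ : Type*} [Group G₁] [Group G₂]
    (D₁ : Set (Subgroup G₁)) (D₂ : Set (Subgroup G₂)) : Set (Subgroup (G₁ × G₂)) :=
  { P | ∃ H₁ ∈ D₁, ∃ H₂ ∈ D₂, P = H₁.prod H₂ }

section Aux

variable {G : Type*} [Group G]

lemma mem_fixedPoints_mk_iff (K H : Subgroup G) (g : G) :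
    (↑g : G ⧸ H) ∈ fixedPoints K (G ⧸ H) ↔ ∀ k ∈ K, g⁻¹ * k * g ∈ H := by
  rw [MulAction.mem_fixedPoints]
  constructor
  · intro h k hk
    have h' := h ⟨k⁻¹, K.inv_mem hk⟩
    change (k⁻¹ : G) • (↑g : G ⧸ H) = ↑g at h'
    rw [MulAction.Quotient.smul_mk, smul_eq_mul, QuotientGroup.eq] at h'
    simpa [mul_assoc] using h'
  · rintro h ⟨k, hk⟩
    change (k : G) • (↑g : G ⧸ H) = ↑g
    rw [MulAction.Quotient.smul_mk, smul_eq_mul, QuotientGroup.eq]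
    simpa [mul_assoc] using h k⁻¹ (K.inv_mem hk)

lemma mark_top (K : Subgroup G) : mark G ⊤ K = 1 := by
  have hs : Subsingleton (G ⧸ (⊤ : Subgroup G)) := QuotientGroup.subsingleton_quotient_top
  have hn : Nonempty (fixedPoints K (G ⧸ (⊤ : Subgroup G))) :=
    ⟨⟨(1 : G), fun m => Subsingleton.elim _ _⟩⟩
  have : Nat.card (fixedPoints K (G ⧸ (⊤ : Subgroup G))) = 1 := Nat.card_unique
  simp [mark, this]

end Aux

section ProdAux

variable {G₁ G₂ : Type*} [Group G₁] [Group G₂]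

lemma map_fst_prod (K₁ : Subgroup G₁) (K₂ : Subgroup G₂) :
    Subgroup.map (MonoidHom.fst G₁ G₂) (K₁.prod K₂) = K₁ := by
  ext x
  simp [Subgroup.mem_map, Subgroup.mem_prod]
  exact fun _ => ⟨1, K₂.one_mem⟩

lemma map_snd_prod (K₁ : Subgroup G₁) (K₂ : Subgroup G₂) :
    Subgroup.map (MonoidHom.snd G₁ G₂) (K₁.prod K₂) = K₂ := by
  ext x
  simp [Subgroup.mem_map, Subgroup.mem_prod]
  exact fun _ => ⟨1, K₁.one_mem⟩

/-- The canonical bijection `(G₁ × G₂) ⧸ (H₁ × H₂) ≃ (G₁ ⧸ H₁) × (G₂ ⧸ H₂)`. -/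
noncomputable def quotProdEquiv (H₁ : Subgroup G₁) (H₂ : Subgroup G₂) :
    ((G₁ × G₂) ⧸ H₁.prod H₂) ≃ (G₁ ⧸ H₁) × (G₂ ⧸ H₂) := by
  refine Equiv.ofBijective (fun q => Quotient.liftOn' q
      (fun g => ((↑g.1 : G₁ ⧸ H₁), (↑g.2 : G₂ ⧸ H₂))) ?_) ⟨?_, ?_⟩
  · rintro ⟨a₁, a₂⟩ ⟨b₁, b₂⟩ hab
    rw [QuotientGroup.leftRel_apply, Subgroup.mem_prod] at hab
    exact Prod.ext (QuotientGroup.eq.mpr hab.1) (QuotientGroup.eq.mpr hab.2)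
  · intro q q' h
    induction q using Quotient.inductionOn' with | _ a =>
    induction q' using Quotient.inductionOn' with | _ b =>
    simp only [Quotient.liftOn'_mk'', Prod.mk.injEq] at h
    refine Quotient.sound' ?_
    rw [QuotientGroup.leftRel_apply, Subgroup.mem_prod]
    exact ⟨QuotientGroup.eq.mp h.1, QuotientGroup.eq.mp h.2⟩
  · rintro ⟨q₁, q₂⟩
    induction q₁ using Quotient.inductionOn' with | _ a =>
    induction q₂ using Quotient.inductionOn' with | _ b =>
    exact ⟨Quotient.mk'' (a, b), rfl⟩

lemma quotProdEquiv_mk (H₁ : Subgroup G₁) (H₂ : Subgroup G₂) (g : G₁ × G₂) :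
    quotProdEquiv H₁ H₂ (↑g) = ((↑g.1 : G₁ ⧸ H₁), (↑g.2 : G₂ ⧸ H₂)) := rfl

/-- The mark of a product subgroup is the product of the marks at the projections. -/
lemma mark_prod (H₁ : Subgroup G₁) (H₂ : Subgroup G₂) (K : Subgroup (G₁ × G₂)) :
    mark (G₁ × G₂) (H₁.prod H₂) K =
      mark G₁ H₁ (K.map (MonoidHom.fst G₁ G₂)) * mark G₂ H₂ (K.map (MonoidHom.snd G₁ G₂)) := by
  have key : ∀ q : (G₁ × G₂) ⧸ H₁.prod H₂, q ∈ fixedPoints K ((G₁ × G₂) ⧸ H₁.prod H₂) ↔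
      ((quotProdEquiv H₁ H₂ q).1 ∈ fixedPoints (K.map (MonoidHom.fst G₁ G₂)) (G₁ ⧸ H₁) ∧
       (quotProdEquiv H₁ H₂ q).2 ∈ fixedPoints (K.map (MonoidHom.snd G₁ G₂)) (G₂ ⧸ H₂)) := by
    intro q
    induction q using Quotient.inductionOn' with | _ g =>
    show ((↑g : (G₁ × G₂) ⧸ H₁.prod H₂) ∈ _) ↔ _
    rw [quotProdEquiv_mk]
    rw [mem_fixedPoints_mk_iff, mem_fixedPoints_mk_iff, mem_fixedPoints_mk_iff]
    constructor
    · intro h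
      constructor
      · rintro k₁ hk₁
        rw [Subgroup.mem_map] at hk₁
        obtain ⟨k, hk, rfl⟩ := hk₁
        exact (Subgroup.mem_prod.mp (h k hk)).1
      · rintro k₂ hk₂
        rw [Subgroup.mem_map] at hk₂
        obtain ⟨k, hk, rfl⟩ := hk₂
        exact (Subgroup.mem_prod.mp (h k hk)).2
    · rintro ⟨ha, hb⟩ k hk
      rw [Subgroup.mem_prod]
      exact ⟨ha k.1 (Subgroup.mem_map.mpr ⟨k, hk, rfl⟩),
             hb k.2 (Subgroup.mem_map.mpr ⟨k, hk, rfl⟩)⟩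
  have hcard : Nat.card (fixedPoints K ((G₁ × G₂) ⧸ H₁.prod H₂)) =
      Nat.card (fixedPoints (K.map (MonoidHom.fst G₁ G₂)) (G₁ ⧸ H₁)) *
      Nat.card (fixedPoints (K.map (MonoidHom.snd G₁ G₂)) (G₂ ⧸ H₂)) := by
    rw [← Nat.card_prod]
    exact Nat.card_congr
      ((Equiv.subtypeEquiv (quotProdEquiv H₁ H₂) key).trans (Equiv.subtypeProdEquivProd))
  simp [mark, hcard]

/-- Pullback of mark vectors along the first projection of subgroups. -/
noncomputable def rhoFst (G₁ G₂ : Type*) [Group G₁] [Group G₂] :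
    (Subgroup G₁ → ℤ) →+* (Subgroup (G₁ × G₂) → ℤ) :=
  Pi.ringHom fun K => Pi.evalRingHom (fun _ => ℤ) (K.map (MonoidHom.fst G₁ G₂))

/-- Pullback of mark vectors along the second projection of subgroups. -/
noncomputable def rhoSnd (G₁ G₂ : Type*) [Group G₁] [Group G₂] :
    (Subgroup G₂ → ℤ) →+* (Subgroup (G₁ × G₂) → ℤ) :=
  Pi.ringHom fun K => Pi.evalRingHom (fun _ => ℤ) (K.map (MonoidHom.snd G₁ G₂))

lemma rhoFst_mark (H₁ : Subgroup G₁) :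
    rhoFst G₁ G₂ (mark G₁ H₁) = mark (G₁ × G₂) (H₁.prod ⊤) := by
  funext K
  rw [mark_prod, mark_top, mul_one]
  rfl

lemma rhoSnd_mark (H₂ : Subgroup G₂) :
    rhoSnd G₁ G₂ (mark G₂ H₂) = mark (G₁ × G₂) ((⊤ : Subgroup G₁).prod H₂) := by
  funext K
  rw [mark_prod, mark_top, one_mul]
  rfl

end ProdAux

/-- For finite groups `G₁, G₂` with collections `D₁, D₂`, there is a ring isomorphism
`B(G₁,D₁) ⊗_ℤ B(G₂,D₂) ≅ B(G₁ × G₂, D₁ × D₂)` sending `[G₁/H₁] ⊗ [G₂/H₂]` to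
`[(G₁×G₂)/(H₁×H₂)]`. -/
theorem tensor_iso_pbr_prod {G₁ G₂ : Type*} [Group G₁] [Group G₂] [Finite G₁] [Finite G₂]
    (D₁ : Set (Subgroup G₁)) (D₂ : Set (Subgroup G₂))
    (h₁ : IsCollection D₁) (h₂ : IsCollection D₂) :
    ∃ e : (pbr G₁ D₁ ⊗[ℤ] pbr G₂ D₂) ≃+* pbr (G₁ × G₂) (prodCollection D₁ D₂),
      ∀ (x : pbr G₁ D₁) (y : pbr G₂ D₂) (H₁ : Subgroup G₁) (H₂ : Subgroup G₂),
        H₁ ∈ D₁ → H₂ ∈ D₂ →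
        (x : Subgroup G₁ → ℤ) = mark G₁ H₁ → (y : Subgroup G₂ → ℤ) = mark G₂ H₂ →
        ((e (x ⊗ₜ[ℤ] y) : pbr (G₁ × G₂) (prodCollection D₁ D₂)) : Subgroup (G₁ × G₂) → ℤ) =
          mark (G₁ × G₂) (H₁.prod H₂) := by
  classical
  haveI : Fintype (Subgroup G₁) := Fintype.ofFinite _
  haveI : Fintype (Subgroup G₂) := Fintype.ofFinite _
  set A := pbr G₁ D₁ with hA
  set B := pbr G₂ D₂ with hB
  set P := pbr (G₁ × G₂) (prodCollection D₁ D₂) with hP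
  -- the algebra map
  let Φ : (A ⊗[ℤ] B) →ₐ[ℤ] (Subgroup (G₁ × G₂) → ℤ) :=
    Algebra.TensorProduct.lift
      (((rhoFst G₁ G₂).comp A.subtype).toIntAlgHom)
      (((rhoSnd G₁ G₂).comp B.subtype).toIntAlgHom)
      (fun x y => Commute.all _ _)
  have Φ_tmul : ∀ (x : A) (y : B),
      Φ (x ⊗ₜ[ℤ] y) = rhoFst G₁ G₂ (x : Subgroup G₁ → ℤ) * rhoSnd G₁ G₂ (y : Subgroup G₂ → ℤ) :=
    fun x y => Algebra.TensorProduct.lift_tmul _ _ _ _ _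
  -- Φ maps into P
  have hRhoFst : ∀ x : A, rhoFst G₁ G₂ (x : Subgroup G₁ → ℤ) ∈ P := by
    intro x
    have hxmem : (x : Subgroup G₁ → ℤ) ∈ A := x.2
    have hmap : A.map (rhoFst G₁ G₂) ≤ P := by
      rw [hA, pbr, RingHom.map_closure]
      refine Subring.closure_le.mpr ?_
      rintro f ⟨f', ⟨H₁, hH₁, rfl⟩, rfl⟩
      exact Subring.subset_closure ⟨H₁.prod ⊤, ⟨H₁, hH₁, ⊤, h₂.1, rfl⟩, rhoFst_mark H₁⟩
    exact hmap ⟨_, hxmem, rfl⟩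
  have hRhoSnd : ∀ y : B, rhoSnd G₁ G₂ (y : Subgroup G₂ → ℤ) ∈ P := by
    intro y
    have hymem : (y : Subgroup G₂ → ℤ) ∈ B := y.2
    have hmap : B.map (rhoSnd G₁ G₂) ≤ P := by
      rw [hB, pbr, RingHom.map_closure]
      refine Subring.closure_le.mpr ?_
      rintro f ⟨f', ⟨H₂, hH₂, rfl⟩, rfl⟩
      exact Subring.subset_closure ⟨(⊤ : Subgroup G₁).prod H₂, ⟨⊤, h₁.1, H₂, hH₂, rfl⟩,
        
        rhoSnd_mark H₂⟩
    exact hmap ⟨_, hymem, rfl⟩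
  have hmem : ∀ z : A ⊗[ℤ] B, Φ z ∈ P := by
    intro z
    induction z using TensorProduct.induction_on with
    | zero => rw [map_zero]; exact zero_mem _
    | tmul x y => rw [Φ_tmul]; exact mul_mem (hRhoFst x) (hRhoSnd y)
    | add a b ha hb => rw [map_add]; exact add_mem ha hb
  -- injectivity of Φ
  have hinj : Function.Injective Φ := by
    -- freeness of A
    haveI : Module.Finite ℤ A := by
      let M₁ : Submodule ℤ (Subgroup G₁ → ℤ) := AddSubgroup.toIntSubmodule A.toAddSubgroup
      haveI : Module.Finite ℤ M₁ := Module.Finite.iff_fg.mpr (IsNoetherian.noetherian M₁)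
      exact Module.Finite.equiv (LinearEquiv.ofBijective
        ({ toFun := fun x : M₁ => (⟨x.1, x.2⟩ : A),
           map_add' := fun _ _ => rfl,
           map_smul' := fun _ _ => rfl } : M₁ →ₗ[ℤ] A)
        ⟨fun a b h => Subtype.ext (congrArg Subtype.val h), fun y => ⟨⟨y.1, y.2⟩, rfl⟩⟩)
    haveI : NoZeroSMulDivisors ℤ A := by
      refine ⟨fun {c x} h => ?_⟩
      have h2 : c • (x : Subgroup G₁ → ℤ) = 0 := by
        have h3 : A.subtype.toAddMonoidHom.toIntLinearMap (c • x) = 0 := by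
          rw [h, map_zero]
        rw [LinearMap.map_smul] at h3
        exact h3
      rcases smul_eq_zero.mp h2 with hc | hx
      · exact Or.inl hc
      · exact Or.inr (Subtype.ext hx)
    haveI : Module.Free ℤ A := Module.free_of_finite_type_torsion_free'
    -- the linear comparison map
    let l₁ : A →ₗ[ℤ] (Subgroup G₁ → ℤ) := A.subtype.toAddMonoidHom.toIntLinearMap
    let l₂ : B →ₗ[ℤ] (Subgroup G₂ → ℤ) := B.subtype.toAddMonoidHom.toIntLinearMap
    have hl₁ : Function.Injective l₁ := Subtype.coe_injective
    have hl₂ : Function.Injective l₂ := Subtype.coe_injective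
    have hj : Function.Injective (TensorProduct.map l₁ l₂) := by
      rw [← LinearMap.rTensor_comp_lTensor]
      exact (Module.Flat.rTensor_preserves_injective_linearMap l₁ hl₁).comp
        (Module.Flat.lTensor_preserves_injective_linearMap l₂ hl₂)
    let p : ((Subgroup G₁ → ℤ) ⊗[ℤ] (Subgroup G₂ → ℤ)) →ₗ[ℤ]
        ((Subgroup G₁ × Subgroup G₂) → ℤ) :=
      (Finsupp.linearEquivFunOnFinite ℤ ℤ (Subgroup G₁ × Subgroup G₂)).toLinearMap ∘ₗ
        (finsuppTensorFinsupp' ℤ (Subgroup G₁) (Subgroup G₂)).toLinearMap ∘ₗ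
        (TensorProduct.congr (Finsupp.linearEquivFunOnFinite ℤ ℤ (Subgroup G₁)).symm
          (Finsupp.linearEquivFunOnFinite ℤ ℤ (Subgroup G₂)).symm).toLinearMap
    have hp : Function.Injective p :=
      (Finsupp.linearEquivFunOnFinite ℤ ℤ _).injective.comp
        ((finsuppTensorFinsupp' ℤ _ _).injective.comp (TensorProduct.congr _ _).injective)
    have hp_tmul : ∀ (f : Subgroup G₁ → ℤ) (g : Subgroup G₂ → ℤ) (K₁ : Subgroup G₁)
        (K₂ : Subgroup G₂), p (f ⊗ₜ[ℤ] g) (K₁, K₂) = f K₁ * g K₂ := by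
      intro f g K₁ K₂
      simp only [p, LinearMap.comp_apply, LinearEquiv.coe_toLinearMap, TensorProduct.congr_tmul]
      change (Finsupp.linearEquivFunOnFinite ℤ ℤ (Subgroup G₁ × Subgroup G₂))
          ((finsuppTensorFinsupp' ℤ (Subgroup G₁) (Subgroup G₂))
            ((TensorProduct.congr (Finsupp.linearEquivFunOnFinite ℤ ℤ (Subgroup G₁)).symm
              (Finsupp.linearEquivFunOnFinite ℤ ℤ (Subgroup G₂)).symm) (f ⊗ₜ[ℤ] g))) (K₁, K₂) = _
      rw [TensorProduct.congr_tmul]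
      rw [show ((Finsupp.linearEquivFunOnFinite ℤ ℤ (Subgroup G₁)).symm f) =
        Finsupp.equivFunOnFinite.symm f from rfl]
      rw [show ((Finsupp.linearEquivFunOnFinite ℤ ℤ (Subgroup G₂)).symm g) =
        Finsupp.equivFunOnFinite.symm g from rfl]
      rw [show (Finsupp.linearEquivFunOnFinite ℤ ℤ (Subgroup G₁ × Subgroup G₂))
          ((finsuppTensorFinsupp' ℤ (Subgroup G₁) (Subgroup G₂))
            ((Finsupp.equivFunOnFinite.symm f) ⊗ₜ[ℤ] (Finsupp.equivFunOnFinite.symm g))) (K₁, K₂) =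
        ((finsuppTensorFinsupp' ℤ (Subgroup G₁) (Subgroup G₂))
            ((Finsupp.equivFunOnFinite.symm f) ⊗ₜ[ℤ] (Finsupp.equivFunOnFinite.symm g))) (K₁, K₂)
        from rfl]
      rw [finsuppTensorFinsupp'_apply_apply]
      simp
    let σ : Subgroup (G₁ × G₂) → Subgroup G₁ × Subgroup G₂ :=
      fun K => (K.map (MonoidHom.fst G₁ G₂), K.map (MonoidHom.snd G₁ G₂))
    have hσ : Function.Surjective σ := by
      rintro ⟨K₁, K₂⟩
      exact ⟨K₁.prod K₂, by simp [σ, map_fst_prod, map_snd_prod]⟩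
    let q : ((Subgroup G₁ × Subgroup G₂) → ℤ) →ₗ[ℤ] (Subgroup (G₁ × G₂) → ℤ) :=
      LinearMap.funLeft ℤ ℤ σ
    have hq : Function.Injective q := by
      intro f g h
      funext s
      obtain ⟨K, rfl⟩ := hσ s
      exact congrFun h K
    have hΦeq : ∀ z : A ⊗[ℤ] B, Φ z = q (p (TensorProduct.map l₁ l₂ z)) := by
      intro z
      induction z using TensorProduct.induction_on with
      | zero => simp
      | tmul x y =>
        rw [Φ_tmul, TensorProduct.map_tmul]
        funext K
        have := hp_tmul (l₁ x) (l₂ y) (K.map (MonoidHom.fst G₁ G₂)) (K.map (MonoidHom.snd G₁ G₂))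
        change (x : Subgroup G₁ → ℤ) (K.map (MonoidHom.fst G₁ G₂)) *
          (y : Subgroup G₂ → ℤ) (K.map (MonoidHom.snd G₁ G₂)) = _
        simpa [q, LinearMap.funLeft, σ, l₁, l₂] using this.symm
      | add a b ha hb => rw [map_add, map_add, map_add, map_add, ha, hb]
    intro a b h
    exact hj (hp (hq (by rw [← hΦeq, ← hΦeq, h])))
  -- surjectivity onto P
  have hsurj : ∀ w : P, ∃ z : A ⊗[ℤ] B, Φ z = (w : Subgroup (G₁ × G₂) → ℤ) := by
    intro w
    have hw : (w : Subgroup (G₁ × G₂) → ℤ) ∈ P := w.2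
    have hle : P ≤ (Φ : A ⊗[ℤ] B →+* (Subgroup (G₁ × G₂) → ℤ)).range := by
      rw [hP, pbr]
      refine Subring.closure_le.mpr ?_
      rintro f ⟨p', ⟨H₁, hH₁, H₂, hH₂, rfl⟩, rfl⟩
      refine ⟨(⟨mark G₁ H₁, Subring.subset_closure ⟨H₁, hH₁, rfl⟩⟩ : A) ⊗ₜ[ℤ]
        (⟨mark G₂ H₂, Subring.subset_closure ⟨H₂, hH₂, rfl⟩⟩ : B), ?_⟩
      show Φ _ = _
      rw [Φ_tmul]
      funext K
      rw [mark_prod]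
      rfl
    obtain ⟨z, hz⟩ := hle hw
    exact ⟨z, hz⟩
  -- assemble the ring equivalence
  let Φ' : (A ⊗[ℤ] B) →+* P :=
    (Φ : A ⊗[ℤ] B →+* (Subgroup (G₁ × G₂) → ℤ)).codRestrict P hmem
  have hΦ'bij : Function.Bijective Φ' := by
    constructor
    · intro a b h
      exact hinj (congrArg Subtype.val h)
    · intro w
      obtain ⟨z, hz⟩ := hsurj w
      exact ⟨z, Subtype.ext hz⟩
  refine ⟨RingEquiv.ofBijective Φ' hΦ'bij, ?_⟩
  intro x y H₁ H₂ hH₁ hH₂ hx hy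
  show ((Φ' (x ⊗ₜ[ℤ] y) : P) : Subgroup (G₁ × G₂) → ℤ) = mark (G₁ × G₂) (H₁.prod H₂)
  have : ((Φ' (x ⊗ₜ[ℤ] y) : P) : Subgroup (G₁ × G₂) → ℤ) = Φ (x ⊗ₜ[ℤ] y) := rfl
  rw [this, Φ_tmul, hx, hy]
  funext K
  rw [mark_prod]
  rfl
end

section
/- Let G₁,…,G_ℓ be finite groups with collections D₁,…,D_ℓ. Then the iterated tensor product ⊗_{i=1}^ℓ B(G_i,D_i) is ring-isomorphic to B(∏_{i=1}^ℓ G_i, ∏_{i=1}^ℓ D_i) via the map induced by (X₁,…,X_ℓ) ↦ X₁ × ⋯ × X_ℓ. -/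
open MulAction

/-- The product subgroup `H₁ × ⋯ × H_ℓ` of `∏ᵢ Gᵢ`. -/
def piSubgroup {ι : Type*} {G : ι → Type*} [∀ i, Group (G i)]
    (H : ∀ i, Subgroup (G i)) : Subgroup (∀ i, G i) :=
  Subgroup.pi Set.univ H

/-- The product collection `{H₁ × ⋯ × H_ℓ : Hᵢ ∈ Dᵢ}` of subgroups of `∏ᵢ Gᵢ`. -/
def piCollection {ι : Type*} {G : ι → Type*} [∀ i, Group (G i)]
    (D : ∀ i, Set (Subgroup (G i))) : Set (Subgroup (∀ i, G i)) :=
  { P | ∃ H : ∀ i, Subgroup (G i), (∀ i, H i ∈ D i) ∧ P = piSubgroup H }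

open scoped TensorProduct
set_option linter.unusedSectionVars false

/-! ### Auxiliary lemmas -/

set_option linter.unusedSectionVars false in
/-- A dual functional over a field picking out one member of a linearly independent family. -/
theorem PBRaux.exists_dual_delta {K V ι : Type*} [Field K] [AddCommGroup V] [Module K V]
    [DecidableEq ι] {v : ι → V} (hs : LinearIndependent K v) (k0 : ι) :
    ∃ μ : V →ₗ[K] K, ∀ k, μ (v k) = if k = k0 then 1 else 0 := by
  set U := Submodule.span K (v '' {k | k ≠ k0}) with hU
  have hnm : v k0 ∉ U := hs.notMem_span_image (by simp)
  have hq : (U.mkQ (v k0)) ≠ 0 := by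
    simpa [Submodule.Quotient.mk_eq_zero] using hnm
  have h2 := (Module.forall_dual_apply_eq_zero_iff K (U.mkQ (v k0))).not.mpr hq
  push_neg at h2
  obtain ⟨φ, hφ⟩ := h2
  refine ⟨(φ (U.mkQ (v k0)))⁻¹ • (φ.comp U.mkQ), fun k => ?_⟩
  by_cases hk : k = k0
  · subst hk
    simpa using inv_mul_cancel₀ hφ
  · have hm : v k ∈ U := Submodule.subset_span ⟨k, by simp [hk], rfl⟩
    have h0 : U.mkQ (v k) = 0 := by simpa [Submodule.Quotient.mk_eq_zero] using hm
    simp [h0, hk]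

namespace PBRaux

section GroupPart

variable {ι : Type*} [Fintype ι] {G : ι → Type*} [∀ i, Group (G i)]

set_option linter.unusedSectionVars false in
theorem projPiSubgroup [DecidableEq ι] (i : ι) (Kv : ∀ j, Subgroup (G j)) :
    Subgroup.map (Pi.evalMonoidHom G i) (piSubgroup Kv) = Kv i := by
  ext x
  constructor
  · rintro ⟨g, hg, rfl⟩
    exact hg i (Set.mem_univ i)
  · intro hx
    refine ⟨Pi.mulSingle i x, ?_, ?_⟩
    · intro j _
      rcases eq_or_ne j i with rfl | hji
      · simpa using hx
      · simpa [Pi.mulSingle_apply, hji] using (Kv j).one_mem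
    · simp [Pi.evalMonoidHom_apply]

theorem mark_top (G₀ : Type*) [Group G₀] (K : Subgroup G₀) : mark G₀ ⊤ K = 1 := by
  have : Subsingleton (G₀ ⧸ (⊤ : Subgroup G₀)) := QuotientGroup.subsingleton_quotient_top
  have h1 : fixedPoints K (G₀ ⧸ (⊤ : Subgroup G₀)) = Set.univ := by
    ext x
    simp only [Set.mem_univ, iff_true, mem_fixedPoints]
    intro m
    exact Subsingleton.elim _ _
  unfold mark
  rw [h1]
  have h2 : Nat.card (Set.univ : Set (G₀ ⧸ (⊤ : Subgroup G₀))) = 1 := by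
    rw [Nat.card_eq_one_iff_unique]
    exact ⟨inferInstance, ⟨⟨QuotientGroup.mk 1, Set.mem_univ _⟩⟩⟩
  rw [h2]; norm_num

variable (H : ∀ i, Subgroup (G i))

/-- coordinatewise quotient map -/
def piQuot : ((∀ i, G i) ⧸ piSubgroup H) → ∀ i, G i ⧸ H i :=
  fun x => Quotient.liftOn' x (fun g i => QuotientGroup.mk (g i)) (by
    intro a b hab
    have h : a⁻¹ * b ∈ piSubgroup H := QuotientGroup.leftRel_apply.mp hab
    funext i
    exact (QuotientGroup.eq).mpr (h i (Set.mem_univ i)))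

theorem piQuot_mk (g : ∀ i, G i) :
    piQuot H (QuotientGroup.mk g) = fun i => QuotientGroup.mk (g i) := rfl

theorem piQuot_smul (g : ∀ i, G i) (x : (∀ i, G i) ⧸ piSubgroup H) :
    piQuot H (g • x) = fun i => g i • piQuot H x i := by
  induction x using Quotient.inductionOn' with
  | h a => rfl

theorem piQuot_injective : Function.Injective (piQuot H) := by
  intro x y h
  induction x using Quotient.inductionOn' with
  | h a =>
  induction y using Quotient.inductionOn' with
  | h b =>
    have h' : ∀ i, (QuotientGroup.mk (a i) : G i ⧸ H i) = QuotientGroup.mk (b i) :=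
      fun i => congrFun h i
    exact (QuotientGroup.eq).mpr (fun i _ => (QuotientGroup.eq).mp (h' i))

theorem piQuot_surjective : Function.Surjective (piQuot H) := by
  intro f
  have h : ∀ i, ∃ g : G i, QuotientGroup.mk g = f i := fun i => QuotientGroup.mk_surjective (f i)
  choose g hg using h
  exact ⟨QuotientGroup.mk g, funext fun i => hg i⟩

theorem mark_piSubgroup (K : Subgroup (∀ i, G i)) :
    mark (∀ i, G i) (piSubgroup H) K
      = ∏ i, mark (G i) (H i) (Subgroup.map (Pi.evalMonoidHom G i) K) := by
  classical
  set πK : ∀ i, Subgroup (G i) := fun i => Subgroup.map (Pi.evalMonoidHom G i) K with hπK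
  have key : ∀ x : (∀ i, G i) ⧸ piSubgroup H,
      x ∈ fixedPoints K ((∀ i, G i) ⧸ piSubgroup H)
        ↔ ∀ i, piQuot H x i ∈ fixedPoints (πK i) (G i ⧸ H i) := by
    intro x
    constructor
    · intro hx i m
      obtain ⟨k, hk, hki⟩ := m.2
      have h1 : (m : ↥(πK i)) • piQuot H x i = (k : ∀ j, G j) i • piQuot H x i := by
        have hmk : (m : G i) = k i := hki.symm
        show (m : G i) • piQuot H x i = k i • piQuot H x i
        rw [hmk]
      rw [h1, ← congrFun (piQuot_smul H k x) i]
      have hfix : k • x = x := hx (⟨k, hk⟩ : K)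
      rw [hfix]
    · intro hf k
      apply piQuot_injective H
      show piQuot H ((k : ∀ j, G j) • x) = piQuot H x
      rw [piQuot_smul]
      funext i
      have hm : (k : ∀ j, G j) i ∈ πK i := ⟨k, k.2, rfl⟩
      exact hf i (⟨(k : ∀ j, G j) i, hm⟩ : ↥(πK i))
  have E : (fixedPoints K ((∀ i, G i) ⧸ piSubgroup H))
      ≃ ∀ i, (fixedPoints (πK i) (G i ⧸ H i)) := by
    refine (Equiv.subtypeEquiv
      (Equiv.ofBijective (piQuot H) ⟨piQuot_injective H, piQuot_surjective H⟩)
      (fun x => key x)).trans (Equiv.subtypePiEquivPi)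
  unfold mark
  rw [Nat.card_congr E, Nat.card_pi]
  push_cast
  rfl

end GroupPart

section Main

variable {ℓ : ℕ} (G : Fin ℓ → Type*) [∀ i, Group (G i)] [∀ i, Finite (G i)]
variable (D : ∀ i, Set (Subgroup (G i)))

/-- Pullback of mark functions along the `i`-th projection of subgroups. -/
noncomputable def rho' (i : Fin ℓ) : (Subgroup (G i) → ℤ) →+* (Subgroup (∀ j, G j) → ℤ) :=
  Pi.ringHom fun K =>
    Pi.evalRingHom (fun _ : Subgroup (G i) => ℤ) (Subgroup.map (Pi.evalMonoidHom G i) K)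

theorem rho'_apply (i : Fin ℓ) (f : Subgroup (G i) → ℤ) (K : Subgroup (∀ j, G j)) :
    rho' G i f K = f (Subgroup.map (Pi.evalMonoidHom G i) K) := rfl

/-- The linear map `pbr (G i) (D i) →ₗ[ℤ] (Subgroup (∏ G) → ℤ)`. -/
noncomputable def gmap (i : Fin ℓ) : ↥(pbr (G i) (D i)) →ₗ[ℤ] (Subgroup (∀ j, G j) → ℤ) :=
  (((rho' G i).comp (pbr (G i) (D i)).subtype).toAddMonoidHom).toIntLinearMap

theorem gmap_apply (i : Fin ℓ) (y : ↥(pbr (G i) (D i))) :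
    gmap G D i y = rho' G i (y : Subgroup (G i) → ℤ) := rfl

/-- The multiplicative multilinear map underlying the isomorphism. -/
noncomputable def fML : MultilinearMap ℤ (fun i => ↥(pbr (G i) (D i)))
    (Subgroup (∀ j, G j) → ℤ) :=
  (MultilinearMap.mkPiAlgebra ℤ (Fin ℓ) (Subgroup (∀ j, G j) → ℤ)).compLinearMap (gmap G D)

theorem fML_apply (x : ∀ i, ↥(pbr (G i) (D i))) :
    fML G D x = ∏ i, rho' G i ((x i : Subgroup (G i) → ℤ)) := by
  simp [fML, MultilinearMap.compLinearMap_apply, MultilinearMap.mkPiAlgebra_apply, gmap_apply]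

theorem fML_apply' (x : ∀ i, ↥(pbr (G i) (D i))) (K : Subgroup (∀ j, G j)) :
    fML G D x K = ∏ i, (x i : Subgroup (G i) → ℤ) (Subgroup.map (Pi.evalMonoidHom G i) K) := by
  rw [fML_apply, Finset.prod_apply]
  rfl

/-- The algebra homomorphism from the tensor product to the function ring. -/
noncomputable def Phi : (⨂[ℤ] i, pbr (G i) (D i)) →ₐ[ℤ] (Subgroup (∀ j, G j) → ℤ) :=
  PiTensorProduct.liftAlgHom (fML G D)
    (by
      rw [fML_apply]
      refine Finset.prod_eq_one (fun i _ => ?_)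
      have h1 : ((1 : ↥(pbr (G i) (D i))) : Subgroup (G i) → ℤ) = 1 := rfl
      rw [Pi.one_apply, h1, map_one])
    (by
      intro x y
      rw [fML_apply, fML_apply, fML_apply, ← Finset.prod_mul_distrib]
      refine Finset.prod_congr rfl (fun i _ => ?_)
      have h1 : (((x * y) i : ↥(pbr (G i) (D i))) : Subgroup (G i) → ℤ)
          = ((x i : Subgroup (G i) → ℤ)) * ((y i : Subgroup (G i) → ℤ)) := rfl
      rw [h1, map_mul])

theorem Phi_tprod (x : ∀ i, ↥(pbr (G i) (D i))) :
    Phi G D (PiTensorProduct.tprod ℤ x) = fML G D x := by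
  simp [Phi, PiTensorProduct.liftAlgHom, PiTensorProduct.lift.tprod]

theorem Phi_tprod_mark (H : ∀ i, Subgroup (G i)) (x : ∀ i, ↥(pbr (G i) (D i)))
    (hx : ∀ i, (x i : Subgroup (G i) → ℤ) = mark (G i) (H i)) :
    Phi G D (PiTensorProduct.tprod ℤ x) = mark (∀ j, G j) (piSubgroup H) := by
  rw [Phi_tprod]
  funext K
  rw [fML_apply' , mark_piSubgroup]
  exact Finset.prod_congr rfl (fun i _ => by rw [hx i])

theorem rho'_mark (i : Fin ℓ) (H : Subgroup (G i)) :
    rho' G i (mark (G i) H)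
      = mark (∀ j, G j) (piSubgroup (Function.update (fun j => (⊤ : Subgroup (G j))) i H)) := by
  classical
  funext K
  rw [rho'_apply, mark_piSubgroup]
  rw [Finset.prod_eq_single i
    (fun j _ hj => by rw [Function.update_of_ne hj]; exact mark_top _ _)
    (fun h => absurd (Finset.mem_univ i) h)]
  rw [Function.update_self]

theorem rho'_mem (hD : ∀ i, IsCollection (D i)) (i : Fin ℓ) :
    ∀ y ∈ pbr (G i) (D i), rho' G i y ∈ pbr (∀ j, G j) (piCollection D) := by
  classical
  intro y hy
  induction hy using Subring.closure_induction with
  | mem f hf =>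
    obtain ⟨H, hH, rfl⟩ := hf
    rw [rho'_mark]
    refine Subring.subset_closure ⟨piSubgroup (Function.update (fun j => (⊤ : Subgroup (G j))) i H),
      ⟨Function.update (fun j => (⊤ : Subgroup (G j))) i H, fun j => ?_, rfl⟩, rfl⟩
    rcases eq_or_ne j i with rfl | hji
    · rw [Function.update_self]; exact hH
    · rw [Function.update_of_ne hji]; exact (hD j).1
  | zero => rw [map_zero]; exact zero_mem _
  | one => rw [map_one]; exact one_mem _
  | add a b _ _ ha hb => rw [map_add]; exact add_mem ha hb
  | neg a _ ha => rw [map_neg]; exact neg_mem ha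
  | mul a b _ _ ha hb => rw [map_mul]; exact mul_mem ha hb

theorem Phi_mem (hD : ∀ i, IsCollection (D i)) (z : ⨂[ℤ] i, pbr (G i) (D i)) :
    Phi G D z ∈ pbr (∀ j, G j) (piCollection D) := by
  induction z using PiTensorProduct.induction_on with
  | smul_tprod r x =>
    rw [map_smul]
    refine zsmul_mem ?_ r
    rw [Phi_tprod, fML_apply]
    exact prod_mem (fun i _ => rho'_mem G D hD i _ (x i).2)
  | add x y hx hy =>
    rw [map_add]; exact add_mem hx hy


theorem Phi_injective : Function.Injective (Phi G D) := by
  classical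
  letI : ∀ i, Fintype (Subgroup (G i)) := fun i => Fintype.ofFinite _
  rw [injective_iff_map_eq_zero]
  intro x hx
  -- the inclusion of the Burnside ring in the function ring
  set incl : ∀ i, ↥(pbr (G i) (D i)) →ₗ[ℤ] (Subgroup (G i) → ℤ) :=
    fun i => ((pbr (G i) (D i)).subtype).toAddMonoidHom.toIntLinearMap with hincl
  have hinclinj : ∀ i, Function.Injective (incl i) := fun i => Subtype.val_injective
  -- a basis of each factor
  set bp : ∀ i, (n : ℕ) × Module.Basis (Fin n) ℤ ↥(LinearMap.range (incl i)) :=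
    fun i => Submodule.basisOfPid (Pi.basisFun ℤ (Subgroup (G i))) (LinearMap.range (incl i))
    with hbp
  set κ : Fin ℓ → Type := fun i => Fin (bp i).1 with hκ
  set b : ∀ i, Module.Basis (κ i) ℤ ↥(pbr (G i) (D i)) :=
    fun i => (bp i).2.map (LinearEquiv.ofInjective (incl i) (hinclinj i)).symm with hb
  -- the tensor basis family
  set T : (∀ i, κ i) → (⨂[ℤ] i, pbr (G i) (D i)) :=
    fun j => PiTensorProduct.tprod ℤ (fun i => b i (j i)) with hT
  -- x lies in the span of the `T j`
  have hxspan : x ∈ Submodule.span ℤ (Set.range T) := by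
    have htop : (⊤ : Submodule ℤ (⨂[ℤ] i, pbr (G i) (D i))) ≤ Submodule.span ℤ (Set.range T) := by
      rw [← PiTensorProduct.span_tprod_eq_top]
      rw [Submodule.span_le]
      rintro _ ⟨f, rfl⟩
      have hexp : PiTensorProduct.tprod ℤ f
          = ∑ j : ∀ i, κ i, (∏ i, (b i).repr (f i) (j i)) • T j := by
        calc PiTensorProduct.tprod ℤ f
            = PiTensorProduct.tprod ℤ (fun i => ∑ k : κ i, (b i).repr (f i) k • b i k) := by
              congr 1; funext i; rw [Module.Basis.sum_repr]
          _ = ∑ j : ∀ i, κ i, PiTensorProduct.tprod ℤ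
                (fun i => (b i).repr (f i) (j i) • b i (j i)) :=
              MultilinearMap.map_sum _ _
          _ = ∑ j : ∀ i, κ i, (∏ i, (b i).repr (f i) (j i)) • T j := by
              refine Finset.sum_congr rfl (fun j _ => ?_)
              exact MultilinearMap.map_smul_univ _ _ _
      rw [hexp]
      exact Submodule.sum_mem _ (fun j _ =>
        Submodule.smul_mem _ _ (Submodule.subset_span ⟨j, rfl⟩))
    exact htop (Submodule.mem_top)
  obtain ⟨c, hc⟩ := (Submodule.mem_span_range_iff_exists_fun ℤ).mp hxspan
  suffices hc0 : ∀ j, c j = 0 by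
    rw [← hc]
    refine Finset.sum_eq_zero (fun j _ => ?_)
    rw [hc0 j, zero_smul]
  intro j0
  -- the integral relation among product functions
  have hrel : ∀ Kv : ∀ i, Subgroup (G i),
      (∑ j : ∀ i, κ i, c j * ∏ i, (incl i (b i (j i))) (Kv i)) = 0 := by
    intro Kv
    have h1 : Phi G D x = 0 := hx
    rw [← hc, map_sum] at h1
    have h2 := congrFun h1 (piSubgroup Kv)
    rw [Finset.sum_apply, Pi.zero_apply] at h2
    rw [← h2]
    refine Finset.sum_congr rfl (fun j _ => ?_)
    rw [map_zsmul, Pi.smul_apply, Phi_tprod, fML_apply', smul_eq_mul]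
    congr 1
    refine Finset.prod_congr rfl (fun i _ => ?_)
    rw [projPiSubgroup i Kv]
    rfl
  -- move to ℚ and pick dual functionals
  set castL : ∀ i, (Subgroup (G i) → ℤ) →ₗ[ℤ] (Subgroup (G i) → ℚ) :=
    fun i => (Pi.ringHom (fun s => (Int.castRingHom ℚ).comp
      (Pi.evalRingHom (fun _ : Subgroup (G i) => ℤ) s))).toAddMonoidHom.toIntLinearMap
    with hcastL
  have hcastinj : ∀ i, Function.Injective (castL i) := by
    intro i f g hfg
    funext s
    have h2 : ((f s : ℤ) : ℚ) = ((g s : ℤ) : ℚ) := congrFun hfg s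
    exact_mod_cast h2
  set vQ : ∀ i, κ i → (Subgroup (G i) → ℚ) := fun i k => castL i (incl i (b i k)) with hvQ
  have liZ : ∀ i, LinearIndependent ℤ (vQ i) := by
    intro i
    have h1 : LinearIndependent ℤ (fun k => incl i (b i k)) :=
      (b i).linearIndependent.map' (incl i) (LinearMap.ker_eq_bot.mpr (hinclinj i))
    have h2 := h1.map' (castL i) (LinearMap.ker_eq_bot.mpr (hcastinj i))
    exact h2
  have liQ : ∀ i, LinearIndependent ℚ (vQ i) := fun i =>
    (LinearIndependent.iff_fractionRing ℤ ℚ).mp (liZ i)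
  choose μ hμ using fun i => PBRaux.exists_dual_delta (liQ i) (j0 i)
  set w : ∀ i, Subgroup (G i) → ℚ := fun i s => μ i (Pi.single s 1) with hw
  have hμe : ∀ i (f : Subgroup (G i) → ℚ), μ i f = ∑ s, f s * w i s := by
    intro i f
    have hsingle : ∀ s : Subgroup (G i),
        (fun j => if s = j then (1:ℚ) else 0) = Pi.single s 1 := by
      intro s
      funext j
      rw [Pi.single_apply]
      exact if_congr eq_comm rfl rfl
    conv_lhs => rw [pi_eq_sum_univ f]
    rw [map_sum]
    refine Finset.sum_congr rfl (fun s _ => ?_)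
    rw [map_smul, smul_eq_mul, hsingle s]
  -- the ℚ-relation
  have hrelQ : ∀ Kv : ∀ i, Subgroup (G i),
      (∑ j : ∀ i, κ i, (c j : ℚ) * ∏ i, (vQ i (j i)) (Kv i)) = 0 := by
    intro Kv
    have h1 := hrel Kv
    have h2 : ((∑ j : ∀ i, κ i, c j * ∏ i, (incl i (b i (j i))) (Kv i) : ℤ) : ℚ) = 0 := by
      rw [h1]; norm_num
    rw [← h2]
    push_cast
    rfl
  -- pair with the product weight
  have hstep : ∀ j : ∀ i, κ i,
      (∑ Kv : ∀ i, Subgroup (G i), ∏ i, (vQ i (j i) (Kv i) * w i (Kv i)))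
        = ∏ i, μ i (vQ i (j i)) := by
    intro j
    have h1 : (∏ i, μ i (vQ i (j i))) = ∏ i, ∑ s : Subgroup (G i), vQ i (j i) s * w i s :=
      Finset.prod_congr rfl (fun i _ => hμe i _)
    rw [h1, Finset.prod_univ_sum, Fintype.piFinset_univ]
  have hdelta : ∀ j : ∀ i, κ i,
      (∏ i, μ i (vQ i (j i))) = if j = j0 then 1 else 0 := by
    intro j
    by_cases hj : j = j0
    · subst hj
      rw [if_pos rfl]
      refine Finset.prod_eq_one (fun i _ => ?_)
      rw [hμ i (j i), if_pos rfl]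
    · rw [if_neg hj]
      obtain ⟨i, hi⟩ : ∃ i, j i ≠ j0 i := by
        by_contra hcon
        push_neg at hcon
        exact hj (funext hcon)
      refine Finset.prod_eq_zero (Finset.mem_univ i) ?_
      rw [hμ i (j i), if_neg hi]
  have key : (∑ Kv : ∀ i, Subgroup (G i), (∏ i, w i (Kv i))
      * (∑ j : ∀ i, κ i, (c j : ℚ) * ∏ i, (vQ i (j i)) (Kv i))) = (c j0 : ℚ) := by
    calc (∑ Kv : ∀ i, Subgroup (G i), (∏ i, w i (Kv i))
        * (∑ j : ∀ i, κ i, (c j : ℚ) * ∏ i, (vQ i (j i)) (Kv i)))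
        = ∑ Kv : ∀ i, Subgroup (G i), ∑ j : ∀ i, κ i,
            (∏ i, w i (Kv i)) * ((c j : ℚ) * ∏ i, (vQ i (j i)) (Kv i)) := by
          refine Finset.sum_congr rfl (fun Kv _ => ?_)
          rw [Finset.mul_sum]
      _ = ∑ j : ∀ i, κ i, ∑ Kv : ∀ i, Subgroup (G i),
            (∏ i, w i (Kv i)) * ((c j : ℚ) * ∏ i, (vQ i (j i)) (Kv i)) := Finset.sum_comm
      _ = ∑ j : ∀ i, κ i, (c j : ℚ) *
            ∑ Kv : ∀ i, Subgroup (G i), ∏ i, (vQ i (j i) (Kv i) * w i (Kv i)) := by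
          refine Finset.sum_congr rfl (fun j _ => ?_)
          rw [Finset.mul_sum]
          refine Finset.sum_congr rfl (fun Kv _ => ?_)
          rw [Finset.prod_mul_distrib]
          ring
      _ = ∑ j : ∀ i, κ i, (c j : ℚ) * (if j = j0 then 1 else 0) := by
          refine Finset.sum_congr rfl (fun j _ => ?_)
          rw [hstep j, hdelta j]
      _ = (c j0 : ℚ) := by
          rw [Finset.sum_congr rfl (fun j _ => by rw [mul_ite, mul_one, mul_zero])]
          rw [Finset.sum_ite_eq' Finset.univ j0 (fun j => (c j : ℚ))]
          rw [if_pos (Finset.mem_univ j0)]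
  have hz : (c j0 : ℚ) = 0 := by
    rw [← key]
    refine Finset.sum_eq_zero (fun Kv _ => ?_)
    rw [hrelQ Kv, mul_zero]
  exact_mod_cast hz

end Main

end PBRaux


set_option maxHeartbeats 1000000 in
/-- For finite groups `G₁, …, G_ℓ` with collections `D₁, …, D_ℓ`, the iterated tensor product
`⊗ᵢ B(Gᵢ,Dᵢ)` (over ℤ) is ring-isomorphic to `B(∏ᵢ Gᵢ, ∏ᵢ Dᵢ)` via the map induced by
`(X₁,…,X_ℓ) ↦ X₁ × ⋯ × X_ℓ`, i.e. sending `[G₁/H₁] ⊗ ⋯ ⊗ [G_ℓ/H_ℓ]` to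
`[∏ᵢ Gᵢ / (H₁ × ⋯ × H_ℓ)]`. -/
theorem piTensor_iso_pbr_pi {ℓ : ℕ} (G : Fin ℓ → Type*) [∀ i, Group (G i)] [∀ i, Finite (G i)]
    (D : ∀ i, Set (Subgroup (G i))) (hD : ∀ i, IsCollection (D i)) :
    ∃ e : (⨂[ℤ] i, pbr (G i) (D i)) ≃+* pbr (∀ i, G i) (piCollection D),
      ∀ (x : ∀ i, pbr (G i) (D i)) (H : ∀ i, Subgroup (G i)),
        (∀ i, H i ∈ D i) →
        (∀ i, ((x i : Subgroup (G i) → ℤ)) = mark (G i) (H i)) →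
        ((e (PiTensorProduct.tprod ℤ x) : pbr (∀ i, G i) (piCollection D)) :
            Subgroup (∀ i, G i) → ℤ) = mark (∀ i, G i) (piSubgroup H) := by
  classical
  have hmem := PBRaux.Phi_mem G D hD
  set Φ' : (⨂[ℤ] i, pbr (G i) (D i)) →+* ↥(pbr (∀ i, G i) (piCollection D)) :=
    RingHom.codRestrict (PBRaux.Phi G D).toRingHom (pbr (∀ i, G i) (piCollection D)) hmem
    with hΦ'
  have hinj : Function.Injective Φ' := by
    intro a b hab
    exact PBRaux.Phi_injective G D (congrArg Subtype.val hab)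
  have hsurj : Function.Surjective Φ' := by
    rintro ⟨y, hy⟩
    have hex : ∃ z, PBRaux.Phi G D z = y := by
      induction hy using Subring.closure_induction with
      | mem f hf =>
        obtain ⟨P, hP, rfl⟩ := hf
        obtain ⟨H, hH, rfl⟩ := hP
        refine ⟨PiTensorProduct.tprod ℤ (fun i => ⟨mark (G i) (H i),
          Subring.subset_closure ⟨H i, hH i, rfl⟩⟩), ?_⟩
        exact PBRaux.Phi_tprod_mark G D H _ (fun i => rfl)
      | zero => exact ⟨0, map_zero _⟩
      | one => exact ⟨1, map_one _⟩
      | add a b _ _ ha hb =>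
        obtain ⟨z1, h1⟩ := ha
        obtain ⟨z2, h2⟩ := hb
        exact ⟨z1 + z2, by rw [map_add, h1, h2]⟩
      | neg a _ ha =>
        obtain ⟨z1, h1⟩ := ha
        exact ⟨-z1, by rw [map_neg, h1]⟩
      | mul a b _ _ ha hb =>
        obtain ⟨z1, h1⟩ := ha
        obtain ⟨z2, h2⟩ := hb
        exact ⟨z1 * z2, by rw [map_mul, h1, h2]⟩
    obtain ⟨z, hz⟩ := hex
    exact ⟨z, Subtype.ext hz⟩
  refine ⟨RingEquiv.ofBijective Φ' ⟨hinj, hsurj⟩, ?_⟩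
  intro x H hH hx
  have h1 : ((RingEquiv.ofBijective Φ' ⟨hinj, hsurj⟩) (PiTensorProduct.tprod ℤ x)
      : Subgroup (∀ i, G i) → ℤ) = PBRaux.Phi G D (PiTensorProduct.tprod ℤ x) := rfl
  rw [h1]
  exact PBRaux.Phi_tprod_mark G D H x hx
end

section
/- Let G₁,…,G_ℓ be finite groups with collections D₁,…,D_ℓ, and set G = ∏ G_i. For each j, the ℤ-linear map f_j : B(G_j,D_j) → B(G, ∏ D_i) induced by [G_j/H] ↦ [G/ (G₁ × ⋯ × G_{j-1} × H × G_{j+1} × ⋯ × G_ℓ)] is an injective ring homomorphism. -/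
open MulAction

section Aux
variable {ℓ : ℕ} {G : Fin ℓ → Type*} [∀ i, Group (G i)] {j : Fin ℓ}

lemma mem_top_update (H : Subgroup (G j)) (g : ∀ i, G i) :
    g ∈ piSubgroup (Function.update (fun i => (⊤ : Subgroup (G i))) j H) ↔ g j ∈ H := by
  constructor
  · intro hg
    have := hg j (Set.mem_univ j)
    simpa using this
  · intro hg i _
    rcases eq_or_ne i j with rfl | hij
    · simpa using hg
    · simp [Function.update_of_ne hij]

noncomputable def quotEquiv (H : Subgroup (G j)) :
    ((∀ i, G i) ⧸ piSubgroup (Function.update (fun i => (⊤ : Subgroup (G i))) j H)) ≃ G j ⧸ H where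
  toFun := Quotient.map' (fun g => g j) (by
    intro a b h
    rw [QuotientGroup.leftRel_apply] at h ⊢
    exact (mem_top_update H _).1 h)
  invFun := Quotient.map' (fun x => Function.update 1 j x) (by
    intro a b h
    rw [QuotientGroup.leftRel_apply] at h ⊢
    rw [mem_top_update]
    simpa using h)
  left_inv := by
    intro q
    induction q using Quotient.inductionOn' with
    | h g =>
      apply Quotient.sound'
      rw [QuotientGroup.leftRel_apply, mem_top_update]
      simp [H.one_mem]
  right_inv := by
    intro q
    induction q using Quotient.inductionOn' with
    | h x =>
      apply Quotient.sound'
      rw [QuotientGroup.leftRel_apply]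
      simp [H.one_mem]

lemma quotEquiv_smul (H : Subgroup (G j)) (k : ∀ i, G i)
    (q : (∀ i, G i) ⧸ piSubgroup (Function.update (fun i => (⊤ : Subgroup (G i))) j H)) :
    quotEquiv H (k • q) = k j • quotEquiv H q := by
  induction q using Quotient.inductionOn' with
  | h g => rfl

lemma card_fixed (H : Subgroup (G j)) (K : Subgroup (∀ i, G i)) :
    Nat.card (fixedPoints K
      ((∀ i, G i) ⧸ piSubgroup (Function.update (fun i => (⊤ : Subgroup (G i))) j H)))
      = Nat.card (fixedPoints (K.map (Pi.evalMonoidHom G j)) (G j ⧸ H)) := by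
  apply Nat.card_congr
  refine (Equiv.subtypeEquiv (quotEquiv H) ?_)
  intro q
  constructor
  · rintro hq ⟨x, hx⟩
    obtain ⟨k, hk, rfl⟩ := hx
    have : (⟨k, hk⟩ : K) • q = q := hq ⟨k, hk⟩
    calc (⟨Pi.evalMonoidHom G j k, _⟩ : K.map (Pi.evalMonoidHom G j)) • quotEquiv H q
        = k j • quotEquiv H q := rfl
      _ = quotEquiv H ((⟨k, hk⟩ : K) • q) := (quotEquiv_smul H k q).symm
      _ = quotEquiv H q := by rw [this]
  · rintro hq ⟨k, hk⟩
    have hmem : Pi.evalMonoidHom G j k ∈ K.map (Pi.evalMonoidHom G j) := ⟨k, hk, rfl⟩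
    have := hq ⟨_, hmem⟩
    apply (quotEquiv H).injective
    show quotEquiv H (k • q) = _
    rw [quotEquiv_smul]
    exact this


lemma map_bot_update (L : Subgroup (G j)) :
    (piSubgroup (Function.update (fun i => (⊥ : Subgroup (G i))) j L)).map
      (Pi.evalMonoidHom G j) = L := by
  ext x
  constructor
  · rintro ⟨g, hg, rfl⟩
    simpa using hg j (Set.mem_univ j)
  · intro hx
    refine ⟨Function.update 1 j x, ?_, by simp⟩
    intro i _
    rcases eq_or_ne i j with rfl | hij
    · simpa using hx
    · simp [Function.update_of_ne hij]

end Aux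

/-- For finite groups `G₁, …, G_ℓ` with collections `D₁, …, D_ℓ` and `G = ∏ᵢ Gᵢ`, for each `j`
there is an injective ring homomorphism `f_j : B(G_j,D_j) → B(G, ∏ᵢ Dᵢ)` induced by
`[G_j/H] ↦ [G / (G₁ × ⋯ × G_{j-1} × H × G_{j+1} × ⋯ × G_ℓ)]`. -/
theorem exists_injective_factor_hom {ℓ : ℕ} (G : Fin ℓ → Type*) [∀ i, Group (G i)]
    [∀ i, Finite (G i)] (D : ∀ i, Set (Subgroup (G i))) (hD : ∀ i, IsCollection (D i))
    (j : Fin ℓ) :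
    ∃ f : pbr (G j) (D j) →+* pbr (∀ i, G i) (piCollection D),
      Function.Injective f ∧
      ∀ (x : pbr (G j) (D j)) (H : Subgroup (G j)), H ∈ D j →
        (x : Subgroup (G j) → ℤ) = mark (G j) H →
        ((f x : pbr (∀ i, G i) (piCollection D)) : Subgroup (∀ i, G i) → ℤ) =
          mark (∀ i, G i) (piSubgroup (Function.update (fun i => (⊤ : Subgroup (G i))) j H)) := by
  classical
  -- the mark-transfer ring hom on function rings
  set π := Pi.evalMonoidHom G j with hπ
  set Φ : (Subgroup (G j) → ℤ) →+* (Subgroup (∀ i, G i) → ℤ) :=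
    Pi.ringHom fun K => Pi.evalRingHom (fun _ => ℤ) (K.map π) with hΦ
  have hΦapply : ∀ (f : Subgroup (G j) → ℤ) (K : Subgroup (∀ i, G i)),
      Φ f K = f (K.map π) := fun _ _ => rfl
  have hmark : ∀ H : Subgroup (G j),
      Φ (mark (G j) H) =
        mark (∀ i, G i) (piSubgroup (Function.update (fun i => (⊤ : Subgroup (G i))) j H)) := by
    intro H
    funext K
    rw [hΦapply]
    unfold mark
    rw [card_fixed H K]
  have hΦinj : Function.Injective Φ := by
    intro f g hfg
    funext L
    have := congrFun hfg (piSubgroup (Function.update (fun i => (⊥ : Subgroup (G i))) j L))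
    rwa [hΦapply, hΦapply, map_bot_update] at this
  have hmaps : ∀ x ∈ pbr (G j) (D j), Φ x ∈ pbr (∀ i, G i) (piCollection D) := by
    intro x hx
    have : Φ x ∈ (pbr (G j) (D j)).map Φ := ⟨x, hx, rfl⟩
    rw [pbr, RingHom.map_closure] at this
    refine Subring.closure_mono ?_ this
    rintro _ ⟨f, ⟨H, hH, rfl⟩, rfl⟩
    refine ⟨piSubgroup (Function.update (fun i => (⊤ : Subgroup (G i))) j H),
      ⟨Function.update (fun i => (⊤ : Subgroup (G i))) j H, ?_, rfl⟩, hmark H⟩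
    · intro i
      rcases eq_or_ne i j with rfl | hij
      · simpa using hH
      · rw [Function.update_of_ne hij]
        exact (hD i).1
  refine ⟨RingHom.codRestrict (Φ.comp (pbr (G j) (D j)).subtype) _
    (fun x => hmaps x x.2), ?_, ?_⟩
  · intro x y hxy
    apply Subtype.ext
    apply hΦinj
    exact congrArg Subtype.val hxy
  · intro x H _ hxH
    show Φ (x : Subgroup (G j) → ℤ) = _
    rw [hxH, hmark H]
end

section
/- Let G₁,…,G_ℓ be finite groups with collections D₁,…,D_ℓ. The kernel of the group homomorphism ρ_ℓ^× : ∏ B(G_i,D_i)^× → (⊗_{i=1}^ℓ B(G_i,D_i))^× induced by the canonical ring homomorphism ρ_ℓ consists exactly of the tuples (x₁,…,x_ℓ) with each x_i = ±1 and an even number of entries equal to -1; in particular |ker ρ_ℓ^×| = 2^{ℓ-1}. -/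
open MulAction

open scoped TensorProduct

lemma tprod_eval {ℓ : ℕ} {κ : Fin ℓ → Type*} (B : ∀ i, Subring (κ i → ℤ))
    (x y : ∀ i, B i) (h : PiTensorProduct.tprod ℤ x = PiTensorProduct.tprod ℤ y)
    (K : ∀ i, κ i) :
    ∏ i, ((x i : κ i → ℤ) (K i)) = ∏ i, ((y i : κ i → ℤ) (K i)) := by
  let lin : ∀ i, (B i) →ₗ[ℤ] ℤ := fun i =>
    (((Pi.evalRingHom (fun _ : κ i => ℤ) (K i)).comp (B i).subtype).toAddMonoidHom).toIntLinearMap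
  let M : MultilinearMap ℤ (fun i => B i) ℤ :=
    (MultilinearMap.mkPiAlgebra ℤ (Fin ℓ) ℤ).compLinearMap lin
  have := congrArg (PiTensorProduct.lift M) h
  simpa [M, lin, PiTensorProduct.lift.tprod, MultilinearMap.compLinearMap_apply,
    MultilinearMap.mkPiAlgebra_apply] using this

lemma prod_pm_one {ℓ : ℕ} (P : Fin ℓ → ℤ) (hP : ∀ i, P i = 1 ∨ P i = -1)
    [DecidablePred fun i => P i = -1] :
    ∏ i, P i = (-1) ^ (Finset.univ.filter (fun i => P i = -1)).card := by
  rw [← Finset.prod_filter_mul_prod_filter_not Finset.univ (fun i => P i = -1)]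
  rw [Finset.prod_congr rfl (fun i hi => (Finset.mem_filter.mp hi).2), Finset.prod_const]
  have h2 : ∏ i ∈ Finset.univ.filter (fun i => ¬ P i = -1), P i = 1 :=
    Finset.prod_eq_one (fun i hi => (hP i).resolve_right (Finset.mem_filter.mp hi).2)
  rw [h2, mul_one]

lemma int_eq_of_mul_eq_one {a b c : ℤ} (h1 : a * c = 1) (h2 : b * c = 1) : a = b := by
  calc a = a * (b * c) := by rw [h2, mul_one]
  _ = b * (a * c) := by ring
  _ = b := by rw [h1, mul_one]

lemma pbr_neg_one_ne_one {G : Type*} [Group G] (D : Set (Subgroup G)) :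
    (-1 : pbr G D) ≠ 1 := by
  intro h
  have h2 := congrArg (fun x : pbr G D => (x : Subgroup G → ℤ) ⊤) h
  simp at h2

def signProdHom (ℓ : ℕ) : (Fin ℓ → ℤˣ) →* ℤˣ :=
  MonoidHom.mk' (fun v => ∏ i, v i) (fun v w => by simp [Finset.prod_mul_distrib])

lemma units_prod_eq_one_iff {ℓ : ℕ} (v : Fin ℓ → ℤˣ) [DecidablePred fun i => v i = -1] :
    ∏ i, v i = 1 ↔ Even (Finset.univ.filter (fun i => v i = -1)).card := by
  classical
  have hval : ((∏ i, v i : ℤˣ) : ℤ) = ∏ i, ((v i : ℤˣ) : ℤ) := map_prod (Units.coeHom ℤ) _ _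
  rw [Units.ext_iff, Units.val_one, hval]
  have h1 : ∀ i, ((v i : ℤˣ) : ℤ) = 1 ∨ ((v i : ℤˣ) : ℤ) = -1 := fun i => by
    rcases Int.units_eq_one_or (v i) with h | h <;> simp [h]
  rw [prod_pm_one _ h1]
  have hfil : (Finset.univ.filter fun i => ((v i : ℤˣ) : ℤ) = -1) =
      Finset.univ.filter (fun i => v i = -1) := by
    ext i; simp only [Finset.mem_filter, Finset.mem_univ, true_and]
    exact ⟨fun h => Units.ext (by simpa using h), fun h => by rw [h]; simp⟩
  rw [hfil, neg_one_pow_eq_one_iff_even (by norm_num : (-1 : ℤ) ≠ 1)]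

/-- For finite groups `G₁, …, G_ℓ` with collections `D₁, …, D_ℓ`, the kernel of the group
homomorphism `ρ_ℓ^× : ∏ᵢ B(Gᵢ,Dᵢ)^× → (⊗ᵢ B(Gᵢ,Dᵢ))^×` induced by the canonical map
`(x₁,…,x_ℓ) ↦ x₁ ⊗ ⋯ ⊗ x_ℓ` consists exactly of the tuples with each entry `±1` and an even
number of entries equal to `-1`; in particular it has order `2^(ℓ-1)`. -/
theorem ker_rho_units {ℓ : ℕ} (hℓ : 1 ≤ ℓ) (G : Fin ℓ → Type*) [∀ i, Group (G i)]
    [∀ i, Finite (G i)] (D : ∀ i, Set (Subgroup (G i))) (hD : ∀ i, IsCollection (D i))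
    (ρ : (∀ i, pbr (G i) (D i))ˣ →* (⨂[ℤ] i, pbr (G i) (D i))ˣ)
    (hρ : ∀ u : (∀ i, pbr (G i) (D i))ˣ,
      ((ρ u : (⨂[ℤ] i, pbr (G i) (D i))) : ⨂[ℤ] i, pbr (G i) (D i)) =
        PiTensorProduct.tprod ℤ (fun i => (u : ∀ i, pbr (G i) (D i)) i)) :
    (∀ u : (∀ i, pbr (G i) (D i))ˣ,
      u ∈ ρ.ker ↔
        ((∀ i, (u : ∀ i, pbr (G i) (D i)) i = 1 ∨ (u : ∀ i, pbr (G i) (D i)) i = -1) ∧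
          Even (Nat.card {i // (u : ∀ i, pbr (G i) (D i)) i = -1}))) ∧
    Nat.card ρ.ker = 2 ^ (ℓ - 1) := by
  classical
  have hne : ∀ i, (-1 : pbr (G i) (D i)) ≠ 1 := fun i => pbr_neg_one_ne_one _
  have hone : PiTensorProduct.tprod ℤ (fun i => (1 : pbr (G i) (D i))) =
      (1 : ⨂[ℤ] i, pbr (G i) (D i)) := by
    have h := hρ 1
    simp only [map_one, Units.val_one, Pi.one_apply] at h
    exact h.symm
  have hmem : ∀ u : (∀ i, pbr (G i) (D i))ˣ, u ∈ ρ.ker ↔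
      PiTensorProduct.tprod ℤ (fun i => (u : ∀ i, pbr (G i) (D i)) i) =
        PiTensorProduct.tprod ℤ (fun i => (1 : pbr (G i) (D i))) := by
    intro u
    rw [MonoidHom.mem_ker, ← Units.val_eq_one, hρ u, hone]
  have hchar : ∀ u : (∀ i, pbr (G i) (D i))ˣ, u ∈ ρ.ker ↔
      ((∀ i, (u : ∀ i, pbr (G i) (D i)) i = 1 ∨ (u : ∀ i, pbr (G i) (D i)) i = -1) ∧
        Even (Nat.card {i // (u : ∀ i, pbr (G i) (D i)) i = -1})) := by
    intro u
    constructor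
    · intro hu
      rw [hmem] at hu
      have hprod : ∀ K : ∀ i, Subgroup (G i),
          ∏ i, (((u : ∀ i, pbr (G i) (D i)) i : Subgroup (G i) → ℤ) (K i)) = 1 := by
        intro K
        have h := tprod_eval (fun i => pbr (G i) (D i))
          (fun i => (u : ∀ i, pbr (G i) (D i)) i) (fun i => 1) hu K
        simpa using h
      set P : Fin ℓ → ℤ :=
        fun i => ((u : ∀ i, pbr (G i) (D i)) i : Subgroup (G i) → ℤ) ⊤ with hPdef
      have hconst : ∀ i K, (((u : ∀ i, pbr (G i) (D i)) i : Subgroup (G i) → ℤ) K) = P i := by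
        intro i K
        have h1 := hprod (Function.update (fun j => (⊤ : Subgroup (G j))) i K)
        have h2 := hprod (fun _ => ⊤)
        rw [← Finset.mul_prod_erase Finset.univ _ (Finset.mem_univ i)] at h1 h2
        rw [Function.update_self] at h1
        have herase : ∀ j ∈ Finset.univ.erase i,
            (((u : ∀ i, pbr (G i) (D i)) j : Subgroup (G j) → ℤ)
              (Function.update (fun j => (⊤ : Subgroup (G j))) i K j)) =
            (((u : ∀ i, pbr (G i) (D i)) j : Subgroup (G j) → ℤ) ⊤) := by
          intro j hj
          rw [Function.update_of_ne (Finset.mem_erase.mp hj).1]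
        rw [Finset.prod_congr rfl herase] at h1
        exact int_eq_of_mul_eq_one h1 h2
      have hP1 : ∀ i, P i = 1 ∨ P i = -1 := by
        intro i
        have h2 := hprod (fun _ => ⊤)
        rw [← Finset.mul_prod_erase Finset.univ _ (Finset.mem_univ i)] at h2
        exact Int.isUnit_iff.mp ⟨⟨_, _, h2, by rw [mul_comm]; exact h2⟩, rfl⟩
      have hval : ∀ i, (u : ∀ i, pbr (G i) (D i)) i = 1 ∨
          (u : ∀ i, pbr (G i) (D i)) i = -1 := by
        intro i
        rcases hP1 i with h | h
        · left; apply Subtype.ext; funext K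
          simp [hconst i K, h]
        · right; apply Subtype.ext; funext K
          simp [hconst i K, h]
      refine ⟨hval, ?_⟩
      have hiff : ∀ i, (u : ∀ i, pbr (G i) (D i)) i = -1 ↔ P i = -1 := by
        intro i
        constructor
        · intro h
          have := congrArg (fun x : pbr (G i) (D i) => (x : Subgroup (G i) → ℤ) ⊤) h
          simpa [hPdef] using this
        · intro h
          apply Subtype.ext; funext K; simp [hconst i K, h]
      have hcard : Nat.card {i // (u : ∀ i, pbr (G i) (D i)) i = -1} =
          (Finset.univ.filter (fun i => P i = -1)).card := by
        rw [Nat.card_congr (Equiv.subtypeEquivRight hiff), Nat.card_eq_fintype_card,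
          Fintype.card_subtype]
      rw [hcard]
      have hPprod : ∏ i, P i = 1 := by
        have := hprod (fun _ => ⊤); exact this
      rw [prod_pm_one P hP1] at hPprod
      exact (neg_one_pow_eq_one_iff_even (by norm_num : (-1 : ℤ) ≠ 1)).mp hPprod
    · rintro ⟨h1, h2⟩
      rw [hmem]
      set ε : Fin ℓ → ℤ := fun i => if (u : ∀ i, pbr (G i) (D i)) i = -1 then -1 else 1
        with hεdef
      have hu : (fun i => (u : ∀ i, pbr (G i) (D i)) i) =
          fun i => ε i • (1 : pbr (G i) (D i)) := by
        funext i
        rcases h1 i with h | h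
        · simp [hεdef, h, Ne.symm (hne i), one_smul]
        · simp [hεdef, h, neg_one_smul]
      rw [hu, MultilinearMap.map_smul_univ]
      have hε1 : ∀ i, ε i = 1 ∨ ε i = -1 := by
        intro i; by_cases h : (u : ∀ i, pbr (G i) (D i)) i = -1 <;> simp [hεdef, h]
      have hfeq : (Finset.univ.filter fun i => ε i = -1) =
          (Finset.univ.filter fun i => (u : ∀ i, pbr (G i) (D i)) i = -1) := by
        ext i
        by_cases h : (u : ∀ i, pbr (G i) (D i)) i = -1 <;> simp [hεdef, h]
      have heven : Even (Finset.univ.filter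
          (fun i => (u : ∀ i, pbr (G i) (D i)) i = -1)).card := by
        rwa [Nat.card_eq_fintype_card, Fintype.card_subtype] at h2
      have hprodε : ∏ i, ε i = 1 := by
        rw [prod_pm_one ε hε1, hfeq]
        exact Even.neg_one_pow heven
      rw [hprodε, one_smul]
  refine ⟨hchar, ?_⟩
  have hcast : ∀ (i : Fin ℓ) (x : ℤˣ), (((x : ℤ) : pbr (G i) (D i)) = -1) ↔ x = -1 := by
    intro i x
    constructor
    · intro h
      rcases Int.units_eq_one_or x with h' | h'
      · exfalso
        rw [h'] at h
        simp only [Units.val_one, Int.cast_one] at h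
        exact hne i h.symm
      · exact h'
    · intro h; rw [h]; simp
  have hWmem : ∀ w : Fin ℓ → ℤˣ,
      (fun i => ((w i : ℤ) : pbr (G i) (D i))) * (fun i => ((w i : ℤ) : pbr (G i) (D i))) = 1 := by
    intro w
    funext i
    simp only [Pi.mul_apply, Pi.one_apply]
    rw [← Int.cast_mul, ← Units.val_mul, Int.units_mul_self, Units.val_one, Int.cast_one]
  have hsgnmem : ∀ u : (∀ i, pbr (G i) (D i))ˣ, u ∈ ρ.ker →
      (fun i => if (u : ∀ i, pbr (G i) (D i)) i = -1 then (-1 : ℤˣ) else 1) ∈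
        (signProdHom ℓ).ker := by
    intro u hu
    obtain ⟨h1, h2⟩ := (hchar u).mp hu
    rw [MonoidHom.mem_ker]
    show (∏ i, if (u : ∀ i, pbr (G i) (D i)) i = -1 then (-1 : ℤˣ) else 1) = 1
    rw [units_prod_eq_one_iff]
    have hfeq : (Finset.univ.filter fun i =>
        (if (u : ∀ i, pbr (G i) (D i)) i = -1 then (-1 : ℤˣ) else 1) = -1) =
        Finset.univ.filter (fun i => (u : ∀ i, pbr (G i) (D i)) i = -1) := by
      ext i
      by_cases h : (u : ∀ i, pbr (G i) (D i)) i = -1 <;> simp [h]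
    rw [hfeq]
    rwa [Nat.card_eq_fintype_card, Fintype.card_subtype] at h2
  set f : ρ.ker → (signProdHom ℓ).ker := fun u =>
    ⟨fun i => if (u.1 : ∀ i, pbr (G i) (D i)) i = -1 then (-1 : ℤˣ) else 1,
      hsgnmem u.1 u.2⟩ with hf
  have finj : Function.Injective f := by
    intro u v huv
    have h := congrFun (Subtype.ext_iff.mp huv)
    apply Subtype.ext; apply Units.ext; funext i
    have hu1 := ((hchar u.1).mp u.2).1 i
    have hv1 := ((hchar v.1).mp v.2).1 i
    have hi := h i
    simp only [hf] at hi
    rcases hu1 with h1 | h1 <;> rcases hv1 with h2 | h2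
    · rw [h1, h2]
    · exfalso
      rw [if_neg (by rw [h1]; exact fun hh => hne i hh.symm), if_pos h2] at hi
      exact (by decide : (1 : ℤˣ) ≠ -1) hi
    · exfalso
      rw [if_pos h1, if_neg (by rw [h2]; exact fun hh => hne i hh.symm)] at hi
      exact (by decide : (1 : ℤˣ) ≠ -1) hi.symm
    · rw [h1, h2]
  have fsurj : Function.Surjective f := by
    intro w
    have hw' : ∏ i, w.1 i = 1 := w.2
    have hwe := (units_prod_eq_one_iff w.1).mp hw'
    have hmem : (⟨fun i => ((w.1 i : ℤ) : pbr (G i) (D i)),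
        fun i => ((w.1 i : ℤ) : pbr (G i) (D i)), hWmem w.1, hWmem w.1⟩ :
        (∀ i, pbr (G i) (D i))ˣ) ∈ ρ.ker := by
      rw [hchar]
      constructor
      · intro i
        rcases Int.units_eq_one_or (w.1 i) with h | h <;> rw [show ((⟨fun i => ((w.1 i : ℤ) : pbr (G i) (D i)),
            fun i => ((w.1 i : ℤ) : pbr (G i) (D i)), hWmem w.1, hWmem w.1⟩ :
            (∀ i, pbr (G i) (D i))ˣ) : ∀ i, pbr (G i) (D i)) i = ((w.1 i : ℤ) : pbr (G i) (D i)) from rfl, h]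
        · left; simp
        · right; simp
      · show Even (Nat.card {i // ((w.1 i : ℤ) : pbr (G i) (D i)) = -1})
        rw [Nat.card_congr (Equiv.subtypeEquivRight (fun i => hcast i (w.1 i)))]
        rwa [Nat.card_eq_fintype_card, Fintype.card_subtype]
    refine ⟨⟨_, hmem⟩, ?_⟩
    apply Subtype.ext
    funext i
    simp only [hf]
    rcases Int.units_eq_one_or (w.1 i) with h | h
    · rw [if_neg (fun hh => by rw [(hcast i (w.1 i)).mp hh] at h; exact absurd h (by decide)), h]
    · rw [if_pos ((hcast i (w.1 i)).mpr h), h]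
  rw [Nat.card_congr (Equiv.ofBijective f ⟨finj, fsurj⟩)]
  have hsurjP : Function.Surjective (signProdHom ℓ) := by
    intro x
    refine ⟨fun j => if j = ⟨0, hℓ⟩ then x else 1, ?_⟩
    show (∏ j, if j = (⟨0, hℓ⟩ : Fin ℓ) then x else 1) = x
    rw [Finset.prod_ite_eq' Finset.univ (⟨0, hℓ⟩ : Fin ℓ) (fun _ => x),
      if_pos (Finset.mem_univ _)]
  have hq := Subgroup.card_eq_card_quotient_mul_card_subgroup (signProdHom ℓ).ker
  have hquot : Nat.card ((Fin ℓ → ℤˣ) ⧸ (signProdHom ℓ).ker) = 2 := by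
    rw [Nat.card_congr (QuotientGroup.quotientKerEquivOfSurjective _ hsurjP).toEquiv,
      Nat.card_eq_fintype_card, Fintype.card_units_int]
  have hdom : Nat.card (Fin ℓ → ℤˣ) = 2 ^ ℓ := by
    rw [Nat.card_pi]
    simp [Nat.card_eq_fintype_card, Fintype.card_units_int]
  rw [hdom, hquot] at hq
  have h2' : 2 * 2 ^ (ℓ - 1) = 2 ^ ℓ := by
    rw [← pow_succ', Nat.sub_add_cancel hℓ]
  omega
end

section
/- Let W be a finite Coxeter group with Coxeter system (W,S). Then the set P_W of all parabolic subgroups of W (subgroups conjugate to ⟨J⟩ for some J ⊆ S) is a collection of W: it contains W, is closed under conjugation, and the intersection of two parabolic subgroups is parabolic. -/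
open MulAction

/-- A parabolic subgroup of a Coxeter system: a conjugate of a standard parabolic subgroup
`⟨J⟩`, `J ⊆ S`. -/
def IsParabolic {B W : Type*} [Group W] {M : CoxeterMatrix B} (cs : CoxeterSystem M W)
    (P : Subgroup W) : Prop :=
  ∃ (J : Set B) (g : W), P = conjSub g (Subgroup.closure (cs.simple '' J))

/-- The set of all parabolic subgroups of a Coxeter system. -/
def parabolics {B W : Type*} [Group W] {M : CoxeterMatrix B} (cs : CoxeterSystem M W) :
    Set (Subgroup W) :=
  { P | IsParabolic cs P }

section aux

attribute [local instance] Classical.propDecidable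
set_option linter.unusedSectionVars false

open CoxeterSystem List

namespace CoxAux

variable {B W : Type*} [Group W] {M : CoxeterMatrix B} (cs : CoxeterSystem M W)

/-! ### Counting occurrences mod 2 -/

noncomputable def cnt (l : List W) (t : W) : ZMod 2 :=
  (l.map fun x => if x = t then (1 : ZMod 2) else 0).sum

theorem cnt_nil (t : W) : cnt ([] : List W) t = 0 := rfl

theorem cnt_cons (a t : W) (l : List W) :
    cnt (a :: l) t = (if a = t then 1 else 0) + cnt l t := by
  simp [cnt]

theorem cnt_append (l l' : List W) (t : W) : cnt (l ++ l') t = cnt l t + cnt l' t := by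
  simp [cnt]

theorem mem_of_cnt_ne_zero {l : List W} {t : W} (h : cnt l t ≠ 0) : t ∈ l := by
  induction l with
  | nil => exact absurd rfl h
  | cons a l ih =>
    rw [cnt_cons] at h
    by_cases ha : a = t
    · simp [ha]
    · rw [if_neg ha, zero_add] at h
      exact List.mem_cons_of_mem _ (ih h)

/-! ### The permutation representation on `W × ZMod 2` -/

noncomputable def toggle (i : B) : W × ZMod 2 → W × ZMod 2 :=
  fun p => (cs.simple i * p.1 * cs.simple i, p.2 + if p.1 = cs.simple i then 1 else 0)

theorem simple_conj_eq_self_iff (i : B) (t : W) :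
    cs.simple i * t * cs.simple i = cs.simple i ↔ t = cs.simple i := by
  constructor
  · intro h
    have h' : cs.simple i * (t * cs.simple i) = cs.simple i * 1 := by
      rw [← mul_assoc, h, mul_one]
    have h'' : t * cs.simple i = 1 := mul_left_cancel h'
    rw [mul_eq_one_iff_eq_inv, cs.inv_simple] at h''
    exact h''
  · rintro rfl
    rw [cs.simple_mul_simple_self, one_mul]

theorem toggle_involutive (i : B) : Function.Involutive (toggle cs i) := by
  rintro ⟨t, ε⟩
  have h1 : cs.simple i * (cs.simple i * t * cs.simple i) * cs.simple i = t := by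
    rw [mul_assoc (cs.simple i) t, cs.simple_mul_simple_cancel_left,
      cs.simple_mul_simple_cancel_right]
  have htwo : (1 : ZMod 2) + 1 = 0 := by decide
  refine Prod.ext h1 ?_
  show ε + (if t = cs.simple i then 1 else 0)
    + (if cs.simple i * t * cs.simple i = cs.simple i then 1 else 0) = ε
  by_cases ht : t = cs.simple i
  · rw [if_pos ht, if_pos ((simple_conj_eq_self_iff cs i t).mpr ht), add_assoc, htwo, add_zero]
  · rw [if_neg ht, if_neg (fun h => ht ((simple_conj_eq_self_iff cs i t).mp h)), add_zero,
      add_zero]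

noncomputable def fperm (i : B) : Equiv.Perm (W × ZMod 2) :=
  Function.Involutive.toPerm _ (toggle_involutive cs i)

theorem fperm_apply (i : B) (p : W × ZMod 2) : fperm cs i p = toggle cs i p := rfl

noncomputable def prodf (ω : List B) : Equiv.Perm (W × ZMod 2) :=
  (ω.map fun i => fperm cs i).prod

theorem prodf_nil : prodf cs ([] : List B) = 1 := rfl

theorem prodf_cons (i : B) (ω : List B) : prodf cs (i :: ω) = fperm cs i * prodf cs ω := by
  simp [prodf]

theorem rightInvSeq_cons (i : B) (ω : List B) :
    cs.rightInvSeq (i :: ω) =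
      ((cs.wordProd ω)⁻¹ * cs.simple i * cs.wordProd ω) :: cs.rightInvSeq ω := rfl

theorem prodf_apply (ω : List B) (t : W) (ε : ZMod 2) :
    prodf cs ω (t, ε) =
      (cs.wordProd ω * t * (cs.wordProd ω)⁻¹, ε + cnt (cs.rightInvSeq ω) t) := by
  induction ω generalizing t ε with
  | nil => simp [prodf_nil, cnt_nil]
  | cons i ω ih =>
    rw [prodf_cons, Equiv.Perm.mul_apply, ih, fperm_apply]
    have hiff : ((cs.wordProd ω)⁻¹ * cs.simple i * cs.wordProd ω = t) ↔
        (cs.wordProd ω * t * (cs.wordProd ω)⁻¹ = cs.simple i) := by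
      constructor <;> intro h <;> rw [← h] <;> group
    simp only [toggle, Prod.mk.injEq]
    constructor
    · rw [cs.wordProd_cons, mul_inv_rev, cs.inv_simple]
      group
    · rw [rightInvSeq_cons, cnt_cons, if_congr hiff.symm rfl rfl]
      ring

/-! ### Alternating words -/

theorem alt_split (i j : B) (m k : ℕ) :
    alternatingWord i j (m + k) =
      (if Even m then alternatingWord i j k else alternatingWord j i k)
        ++ alternatingWord i j m := by
  induction k with
  | zero =>
    by_cases hm : Even m <;> simp [hm, alternatingWord]
  | succ k ih =>
    have hmk : m + (k + 1) = (m + k) + 1 := rfl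
    rw [hmk, alternatingWord_succ', ih]
    by_cases hm : Even m <;> by_cases hk : Even k <;>
      simp [alternatingWord_succ', hm, hk, Nat.even_add]

theorem alt_drop (i j : B) (m p : ℕ) (h : p ≤ m) :
    (alternatingWord i j m).drop p = alternatingWord i j (m - p) := by
  have h2 : (m - p) + p = m := Nat.sub_add_cancel h
  conv_lhs => rw [← h2, alt_split i j (m - p) p]
  by_cases he : Even (m - p)
  · rw [if_pos he]; exact List.drop_left' (by simp)
  · rw [if_neg he]; exact List.drop_left' (by simp)

theorem alt_add (i j : B) (q : ℕ) :
    cs.wordProd (alternatingWord i j (q + M i j)) =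
      cs.wordProd (alternatingWord i j (M i j)) * cs.wordProd (alternatingWord i j q) := by
  rw [alt_split i j q (M i j), cs.wordProd_append]
  by_cases he : Even q
  · rw [if_pos he]
  · rw [if_neg he]
    congr 1
    have h1 := cs.wordProd_braidWord_eq i j
    unfold CoxeterSystem.braidWord at h1
    conv_lhs => rw [M.symmetric i j]
    exact h1.symm

theorem ris_getD (ω : List B) (p : ℕ) (hp : p < ω.length) :
    (cs.rightInvSeq ω).getD p 1 =
      (cs.wordProd (ω.drop (p + 1)))⁻¹ * cs.wordProd (ω.drop p) := by
  rw [cs.getD_rightInvSeq]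
  rw [List.drop_eq_getElem_cons hp, cs.wordProd_cons]
  rw [List.getElem?_eq_getElem hp]
  simp [mul_assoc]

theorem ris_half (i j : B) :
    ∀ p < M i j, (cs.rightInvSeq (alternatingWord i j (2 * M i j))).getD p 1
      = (cs.rightInvSeq (alternatingWord i j (2 * M i j))).getD (p + M i j) 1 := by
  intro p hp
  have hlen : (alternatingWord i j (2 * M i j)).length = 2 * M i j := by simp
  rw [ris_getD cs _ p (by rw [hlen]; omega), ris_getD cs _ (p + M i j) (by rw [hlen]; omega)]
  rw [alt_drop i j _ (p + 1) (by omega), alt_drop i j _ p (by omega),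
    alt_drop i j _ (p + M i j + 1) (by omega), alt_drop i j _ (p + M i j) (by omega)]
  have e1 : 2 * M i j - p = (M i j - p) + M i j := by omega
  have e2 : 2 * M i j - (p + 1) = (M i j - (p + 1)) + M i j := by omega
  have e3 : 2 * M i j - (p + M i j) = M i j - p := by omega
  have e4 : 2 * M i j - (p + M i j + 1) = M i j - (p + 1) := by omega
  rw [e1, e2, e3, e4, alt_add, alt_add]
  group

theorem cnt_ris_alt (i j : B) (t : W) :
    cnt (cs.rightInvSeq (alternatingWord i j (2 * M i j))) t = 0 := by
  set l := cs.rightInvSeq (alternatingWord i j (2 * M i j)) with hl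
  have hlen : l.length = 2 * M i j := by simp [hl]
  have heq : l.take (M i j) = l.drop (M i j) := by
    apply List.ext_getElem
    · simp [hlen]; omega
    · intro p h1 h2
      have hp : p < M i j := by
        rw [List.length_take, hlen] at h1; omega
      have hkey := ris_half cs i j p hp
      rw [← hl] at hkey
      rw [List.getD_eq_getElem l 1 (by rw [hlen]; omega),
        List.getD_eq_getElem l 1 (by rw [hlen]; omega)] at hkey
      rw [List.getElem_take, List.getElem_drop]
      convert hkey using 2
      omega
  have htake : l = l.take (M i j) ++ l.drop (M i j) := (List.take_append_drop _ _).symm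
  rw [htake, cnt_append, heq]
  have : ∀ x : ZMod 2, x + x = 0 := by decide
  exact this _

theorem pow_eq_prodf (i j : B) (m : ℕ) :
    (fperm cs i * fperm cs j) ^ m = prodf cs (alternatingWord i j (2 * m)) := by
  induction m with
  | zero => simp [prodf, CoxeterSystem.alternatingWord]
  | succ m ih =>
    have h1 : 2 * (m + 1) = (2 * m + 1) + 1 := by ring
    rw [h1, alternatingWord_succ', alternatingWord_succ']
    rw [if_neg (by simp [Nat.even_add_one]), if_pos (even_two_mul m)]
    rw [prodf_cons, prodf_cons, ← ih, pow_succ', mul_assoc]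

theorem liftable : M.IsLiftable (fun i => fperm cs i) := by
  intro i j
  rw [pow_eq_prodf]
  apply Equiv.ext
  rintro ⟨t, ε⟩
  rw [prodf_apply]
  have hπ : cs.wordProd (alternatingWord i j (2 * M i j)) = 1 := by
    rw [cs.prod_alternatingWord_eq_mul_pow, if_pos (even_two_mul _), one_mul]
    have h2 : 2 * M i j / 2 = M i j := by omega
    rw [h2, cs.simple_mul_simple_pow]
  rw [hπ, cnt_ris_alt]
  simp


/-! ### The homomorphism and the parity function -/

noncomputable def phi : W →* Equiv.Perm (W × ZMod 2) :=
  cs.lift ⟨fun i => fperm cs i, liftable cs⟩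

theorem phi_simple (i : B) : phi cs (cs.simple i) = fperm cs i :=
  cs.lift_apply_simple (liftable cs) i

theorem phi_wordProd (ω : List B) : phi cs (cs.wordProd ω) = prodf cs ω := by
  induction ω with
  | nil => simp [prodf_nil]
  | cons i ω ih => rw [cs.wordProd_cons, map_mul, phi_simple, prodf_cons, ih]

noncomputable def nn (w t : W) : ZMod 2 := ((phi cs w) (t, 0)).2

theorem cnt_ris_eq_nn (ω : List B) (t : W) :
    cnt (cs.rightInvSeq ω) t = nn cs (cs.wordProd ω) t := by
  rw [nn, phi_wordProd, prodf_apply, zero_add]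

theorem phi_apply (w t : W) (ε : ZMod 2) :
    phi cs w (t, ε) = (w * t * w⁻¹, ε + nn cs w t) := by
  obtain ⟨ω, rfl⟩ := cs.wordProd_surjective w
  rw [phi_wordProd, prodf_apply, cnt_ris_eq_nn]

theorem nn_conj (j : B) (w t : W) :
    nn cs (cs.simple j * w * cs.simple j) (cs.simple j * t * cs.simple j) =
      (if t = cs.simple j then 1 else 0) + nn cs w t
        + (if w * t * w⁻¹ = cs.simple j then 1 else 0) := by
  have hmul : phi cs (cs.simple j * w * cs.simple j)
      = fperm cs j * (phi cs w * fperm cs j) := by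
    rw [← phi_simple, ← map_mul, ← map_mul, mul_assoc]
  have e1 : fperm cs j ((cs.simple j * t * cs.simple j, (0 : ZMod 2)))
      = (t, if t = cs.simple j then 1 else 0) := by
    rw [fperm_apply]
    simp only [toggle, Prod.mk.injEq]
    constructor
    · rw [mul_assoc (cs.simple j) t, cs.simple_mul_simple_cancel_left,
        cs.simple_mul_simple_cancel_right]
    · rw [zero_add, if_congr (simple_conj_eq_self_iff cs j t) rfl rfl]
  rw [nn, hmul, Equiv.Perm.mul_apply, Equiv.Perm.mul_apply, e1, phi_apply, fperm_apply]
  simp only [toggle]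

theorem nn_reflection_self {t : W} (ht : cs.IsReflection t) : nn cs t t = 1 := by
  obtain ⟨w, i, rfl⟩ := ht
  induction w using cs.simple_induction_left with
  | one =>
    simp only [one_mul, inv_one, mul_one]
    rw [nn, phi_simple, fperm_apply]
    simp [toggle]
  | mul_simple_left w j ih =>
    set t0 := w * cs.simple i * w⁻¹ with ht0
    have hT : (cs.simple j * w) * cs.simple i * (cs.simple j * w)⁻¹
        = cs.simple j * t0 * cs.simple j := by
      rw [mul_inv_rev, cs.inv_simple, ht0]
      group
    rw [hT, nn_conj]
    have hself : t0 * t0 * t0⁻¹ = t0 := by group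
    rw [hself, ih]
    have hx : ∀ x : ZMod 2, x + 1 + x = 1 := by decide
    exact hx _

theorem nn_mul_reflection {t : W} (ht : cs.IsReflection t) (w : W) :
    nn cs (w * t) t = 1 + nn cs w t := by
  have e1 : phi cs t ((t, (0 : ZMod 2))) = (t, 1) := by
    rw [phi_apply, nn_reflection_self cs ht, zero_add]
    have : t * t * t⁻¹ = t := by group
    rw [this]
  have : ((phi cs (w * t)) (t, (0:ZMod 2))).2 = 1 + nn cs w t := by
    rw [map_mul, Equiv.Perm.mul_apply, e1, phi_apply]
  exact this

theorem nn_one_iff {t : W} (ht : cs.IsReflection t) (w : W) :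
    nn cs w t = 1 ↔ cs.length (w * t) < cs.length w := by
  have dir : ∀ v : W, nn cs v t = 1 → cs.length (v * t) < cs.length v := by
    intro v hv
    obtain ⟨ω, hred, rfl⟩ := cs.exists_reduced_word' v
    have hmem : t ∈ cs.rightInvSeq ω := by
      apply mem_of_cnt_ne_zero
      rw [cnt_ris_eq_nn, hv]
      exact one_ne_zero
    exact (cs.isRightInversion_of_mem_rightInvSeq hred hmem).2
  constructor
  · exact dir w
  · intro hlt
    by_contra hne
    have h0 : nn cs w t = 0 := by
      have hcases : ∀ x : ZMod 2, x = 0 ∨ x = 1 := by decide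
      rcases hcases (nn cs w t) with h | h
      · exact h
      · exact absurd h hne
    have h1 : nn cs (w * t) t = 1 := by rw [nn_mul_reflection cs ht, h0, add_zero]
    have h2 := dir (w * t) h1
    rw [mul_assoc, ht.mul_self, mul_one] at h2
    omega

/-! ### The strong exchange property -/

theorem mem_ris_of_lt {ω : List B} (hred : cs.IsReduced ω) {t : W} (ht : cs.IsReflection t)
    (hlt : cs.length (cs.wordProd ω * t) < cs.length (cs.wordProd ω)) :
    t ∈ cs.rightInvSeq ω := by
  apply mem_of_cnt_ne_zero
  rw [cnt_ris_eq_nn, (nn_one_iff cs ht _).mpr hlt]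
  exact one_ne_zero

theorem exchange_right {ω : List B} (hred : cs.IsReduced ω) {t : W} (ht : cs.IsReflection t)
    (hlt : cs.length (cs.wordProd ω * t) < cs.length (cs.wordProd ω)) :
    ∃ k < ω.length, cs.wordProd ω * t = cs.wordProd (ω.eraseIdx k) := by
  obtain ⟨k, hk, hkt⟩ := List.mem_iff_getElem.mp (mem_ris_of_lt cs hred ht hlt)
  refine ⟨k, by simpa using hk, ?_⟩
  have h := cs.wordProd_mul_getD_rightInvSeq ω k
  rw [List.getD_eq_getElem _ 1 hk, hkt] at h
  exact h

theorem exchange_left {ω : List B} (hred : cs.IsReduced ω) {t : W} (ht : cs.IsReflection t)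
    (hlt : cs.length (t * cs.wordProd ω) < cs.length (cs.wordProd ω)) :
    ∃ k < ω.length, t * cs.wordProd ω = cs.wordProd (ω.eraseIdx k) := by
  have hred' : cs.IsReduced ω.reverse := (cs.isReduced_reverse_iff ω).mpr hred
  have hlt' : cs.length (cs.wordProd ω.reverse * t) < cs.length (cs.wordProd ω.reverse) := by
    rw [cs.wordProd_reverse]
    have e1 : (cs.wordProd ω)⁻¹ * t = (t * cs.wordProd ω)⁻¹ := by
      rw [mul_inv_rev, ht.inv]
    rw [e1, cs.length_inv, cs.length_inv]
    exact hlt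
  have hmem := mem_ris_of_lt cs hred' ht hlt'
  rw [cs.rightInvSeq_reverse, List.mem_reverse] at hmem
  obtain ⟨k, hk, hkt⟩ := List.mem_iff_getElem.mp hmem
  refine ⟨k, by simpa using hk, ?_⟩
  have h := cs.getD_leftInvSeq_mul_wordProd ω k
  rw [List.getD_eq_getElem _ 1 hk, hkt] at h
  exact h


/-! ### Standard parabolic subgroups -/

theorem wordProd_mem (J : Set B) {ω : List B} (hω : ∀ b ∈ ω, b ∈ J) :
    cs.wordProd ω ∈ Subgroup.closure (cs.simple '' J) := by
  induction ω with
  | nil => rw [cs.wordProd_nil]; exact one_mem _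
  | cons i ω ih =>
    rw [cs.wordProd_cons]
    exact mul_mem (Subgroup.subset_closure ⟨i, hω i (List.mem_cons_self), rfl⟩)
      (ih fun b hb => hω b (List.mem_cons_of_mem _ hb))

theorem exists_reduced_J_word (J : Set B) {w : W}
    (hw : w ∈ Subgroup.closure (cs.simple '' J)) :
    ∃ ω : List B, cs.IsReduced ω ∧ (∀ b ∈ ω, b ∈ J) ∧ cs.wordProd ω = w := by
  have key : ∀ (x : W), (∃ ω, cs.IsReduced ω ∧ (∀ b ∈ ω, b ∈ J) ∧ cs.wordProd ω = x) →
      ∀ j ∈ J, ∃ ω, cs.IsReduced ω ∧ (∀ b ∈ ω, b ∈ J) ∧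
        cs.wordProd ω = x * cs.simple j := by
    rintro x ⟨ω, hred, hmem, rfl⟩ j hj
    rcases cs.length_mul_simple (cs.wordProd ω) j with h | h
    · refine ⟨ω ++ [j], ?_, ?_, ?_⟩
      · unfold CoxeterSystem.IsReduced
        rw [cs.wordProd_append, cs.wordProd_singleton, h, hred]
        simp
      · intro b hb
        rcases List.mem_append.mp hb with hb | hb
        · exact hmem b hb
        · rw [List.mem_singleton.mp hb]; exact hj
      · rw [cs.wordProd_append, cs.wordProd_singleton]
    · have hlt : cs.length (cs.wordProd ω * cs.simple j) < cs.length (cs.wordProd ω) := by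
        omega
      obtain ⟨k, hk, heq⟩ := exchange_right cs hred (cs.isReflection_simple j) hlt
      refine ⟨ω.eraseIdx k, ?_, ?_, heq.symm⟩
      · unfold CoxeterSystem.IsReduced
        rw [← heq, List.length_eraseIdx_of_lt hk]
        have hr := hred
        unfold CoxeterSystem.IsReduced at hr
        omega
      · intro b hb
        exact hmem b (List.mem_of_mem_eraseIdx hb)
  induction hw using Subgroup.closure_induction_right with
  | one => exact ⟨[], by simp [CoxeterSystem.IsReduced], by simp, cs.wordProd_nil⟩
  | mul_right x hx y hy ih =>
    obtain ⟨j, hj, rfl⟩ := hy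
    exact key x ih j hj
  | mul_inv_cancel x hx y hy ih =>
    obtain ⟨j, hj, rfl⟩ := hy
    rw [cs.inv_simple]
    exact key x ih j hj

theorem exists_simple_left_descent (J : Set B) {w : W}
    (hw : w ∈ Subgroup.closure (cs.simple '' J)) (hne : w ≠ 1) :
    ∃ i ∈ J, cs.simple i * w ∈ Subgroup.closure (cs.simple '' J) ∧
      cs.length (cs.simple i * w) + 1 = cs.length w := by
  obtain ⟨ω, hred, hmem, rfl⟩ := exists_reduced_J_word cs J hw
  cases ω with
  | nil => exact absurd cs.wordProd_nil hne
  | cons i ω' =>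
    refine ⟨i, hmem i (List.mem_cons_self), ?_, ?_⟩
    · rw [cs.wordProd_cons, cs.simple_mul_simple_cancel_left]
      exact wordProd_mem cs J (fun b hb => hmem b (List.mem_cons_of_mem _ hb))
    · rw [cs.wordProd_cons, cs.simple_mul_simple_cancel_left, ← cs.wordProd_cons]
      have h1 : cs.length (cs.wordProd ω') ≤ ω'.length := cs.length_wordProd_le ω'
      have h2 : cs.length (cs.wordProd (i :: ω')) = ω'.length + 1 := by
        have hr := hred
        unfold CoxeterSystem.IsReduced at hr
        simpa using hr
      rcases cs.length_simple_mul (cs.wordProd ω') i with h | h <;>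
        rw [← cs.wordProd_cons] at h <;> omega

theorem eq_simple_of_length_one (J : Set B) {w : W}
    (hw : w ∈ Subgroup.closure (cs.simple '' J)) (h1 : cs.length w = 1) :
    w ∈ cs.simple '' J := by
  obtain ⟨ω, hred, hmem, rfl⟩ := exists_reduced_J_word cs J hw
  unfold CoxeterSystem.IsReduced at hred
  rw [h1] at hred
  cases ω with
  | nil => simp at hred
  | cons i ω' =>
    have hlen : ω'.length = 0 := by simpa using hred.symm
    rw [List.length_eq_zero_iff] at hlen
    subst hlen
    exact ⟨i, hmem i (List.mem_cons_self), (cs.wordProd_singleton i).symm⟩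

theorem length_min_coset (J : Set B) {d : W}
    (hd : ∀ u ∈ Subgroup.closure (cs.simple '' J), cs.length d ≤ cs.length (u * d)) :
    ∀ x ∈ Subgroup.closure (cs.simple '' J),
      cs.length (x * d) = cs.length x + cs.length d := by
  have main : ∀ n, ∀ x ∈ Subgroup.closure (cs.simple '' J), cs.length x = n →
      cs.length (x * d) = cs.length x + cs.length d := by
    intro n
    induction n using Nat.strong_induction_on with
    | _ n ih =>
      intro x hx hxn
      by_cases hx1 : x = 1
      · subst hx1; simp
      · obtain ⟨i, hiJ, hx', hlen⟩ := exists_simple_left_descent cs J hx hx1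
        set x' := cs.simple i * x with hx'def
        have hxx : x = cs.simple i * x' := by
          rw [hx'def, cs.simple_mul_simple_cancel_left]
        have ihx' : cs.length (x' * d) = cs.length x' + cs.length d :=
          ih (cs.length x') (by omega) x' hx' rfl
        rcases cs.length_simple_mul (x' * d) i with h | h
        · rw [show x * d = cs.simple i * (x' * d) from by rw [hxx, mul_assoc], h, ihx']
          omega
        · exfalso
          obtain ⟨ξ, hξred, hξmem, hξeq⟩ := exists_reduced_J_word cs J hx'
          obtain ⟨δ, hδred, hδeq⟩ := cs.exists_reduced_word' d
          have hξlen : ξ.length = cs.length x' := by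
            have := hξred; unfold CoxeterSystem.IsReduced at this; rw [hξeq] at this
            omega
          have hδlen : δ.length = cs.length d := by
            have := hδred; unfold CoxeterSystem.IsReduced at this; rw [← hδeq] at this
            omega
          have hω : cs.wordProd (ξ ++ δ) = x' * d := by
            rw [cs.wordProd_append, hξeq, ← hδeq]
          have hωred : cs.IsReduced (ξ ++ δ) := by
            unfold CoxeterSystem.IsReduced
            rw [hω, ihx', List.length_append]
            omega
          have hlt : cs.length (cs.simple i * cs.wordProd (ξ ++ δ))
              < cs.length (cs.wordProd (ξ ++ δ)) := by
            rw [hω]; omega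
          obtain ⟨k, hk, hkeq⟩ := exchange_left cs hωred (cs.isReflection_simple i) hlt
          rw [hω] at hkeq
          by_cases hkξ : k < ξ.length
          · rw [List.eraseIdx_append_of_lt_length hkξ, cs.wordProd_append, ← hδeq] at hkeq
            have hxd : x * d = cs.wordProd (ξ.eraseIdx k) * d := by
              rw [hxx, mul_assoc, hkeq]
            have hxeq : x = cs.wordProd (ξ.eraseIdx k) := mul_right_cancel hxd
            have hle : cs.length x ≤ (ξ.eraseIdx k).length :=
              hxeq ▸ cs.length_wordProd_le _
            rw [List.length_eraseIdx_of_lt hkξ] at hle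
            omega
          · push_neg at hkξ
            rw [List.eraseIdx_append_of_length_le hkξ, cs.wordProd_append, hξeq] at hkeq
            set u := x'⁻¹ * cs.simple i * x' with hu
            have hud : u * d = cs.wordProd (δ.eraseIdx (k - ξ.length)) := by
              calc u * d = x'⁻¹ * (cs.simple i * (x' * d)) := by rw [hu]; group
                _ = x'⁻¹ * (x' * cs.wordProd (δ.eraseIdx (k - ξ.length))) := by rw [hkeq]
                _ = _ := by group
            have humem : u ∈ Subgroup.closure (cs.simple '' J) := by
              rw [hu]
              exact mul_mem (mul_mem (inv_mem hx')
                (Subgroup.subset_closure ⟨i, hiJ, rfl⟩)) hx'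
            have hge := hd u humem
            rw [hud] at hge
            have hle : cs.length (cs.wordProd (δ.eraseIdx (k - ξ.length)))
                ≤ (δ.eraseIdx (k - ξ.length)).length := cs.length_wordProd_le _
            have hklt : k - ξ.length < δ.length := by
              have hkl := hk
              rw [List.length_append] at hkl
              omega
            rw [List.length_eraseIdx_of_lt hklt] at hle
            omega
  intro x hx
  exact main (cs.length x) x hx rfl

theorem length_min_coset_right (K : Set B) {d : W}
    (hd : ∀ v ∈ Subgroup.closure (cs.simple '' K), cs.length d ≤ cs.length (d * v)) :
    ∀ y ∈ Subgroup.closure (cs.simple '' K),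
      cs.length (d * y) = cs.length d + cs.length y := by
  have hd' : ∀ u ∈ Subgroup.closure (cs.simple '' K),
      cs.length d⁻¹ ≤ cs.length (u * d⁻¹) := by
    intro u hu
    calc cs.length d⁻¹ = cs.length d := cs.length_inv d
      _ ≤ cs.length (d * u⁻¹) := hd u⁻¹ (inv_mem hu)
      _ = cs.length (u * d⁻¹) := by
          rw [← cs.length_inv (u * d⁻¹)]
          congr 1
          group
  intro y hy
  have h := length_min_coset cs K hd' y⁻¹ (inv_mem hy)
  have e : y⁻¹ * d⁻¹ = (d * y)⁻¹ := by group
  rw [e, cs.length_inv, cs.length_inv, cs.length_inv] at h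
  omega

end CoxAux

/-! ### Lemmas about `conjSub` -/

namespace CoxAux

theorem mem_conjSub {G : Type*} [Group G] {g x : G} {H : Subgroup G} :
    x ∈ conjSub g H ↔ g⁻¹ * x * g ∈ H := by
  unfold conjSub
  rw [Subgroup.mem_map_equiv (f := MulAut.conj g)]
  rw [MulAut.conj_symm_apply]

theorem conjSub_conjSub {G : Type*} [Group G] (g h : G) (H : Subgroup G) :
    conjSub g (conjSub h H) = conjSub (g * h) H := by
  ext x
  simp only [mem_conjSub]
  constructor <;> intro hx
  · have e : (g * h)⁻¹ * x * (g * h) = h⁻¹ * (g⁻¹ * x * g) * h := by group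
    rw [e]; exact hx
  · have e : h⁻¹ * (g⁻¹ * x * g) * h = (g * h)⁻¹ * x * (g * h) := by group
    rw [e]; exact hx

theorem conjSub_one {G : Type*} [Group G] (H : Subgroup G) : conjSub 1 H = H := by
  ext x
  simp [mem_conjSub]

theorem conjSub_inf {G : Type*} [Group G] (g : G) (H K : Subgroup G) :
    conjSub g (H ⊓ K) = conjSub g H ⊓ conjSub g K := by
  ext x
  simp [mem_conjSub, Subgroup.mem_inf]

theorem conjSub_of_mem {G : Type*} [Group G] {g : G} {H : Subgroup G} (hg : g ∈ H) :
    conjSub g H = H := by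
  ext x
  rw [mem_conjSub]
  constructor
  · intro h
    have h2 := mul_mem (mul_mem hg h) (inv_mem hg)
    have e : g * (g⁻¹ * x * g) * g⁻¹ = x := by group
    rwa [e] at h2
  · intro h
    exact mul_mem (mul_mem (inv_mem hg) h) hg

/-! ### Kilmoyer's theorem -/

variable {B W : Type*} [Group W] {M : CoxeterMatrix B} (cs : CoxeterSystem M W)

theorem kilmoyer (J K : Set B) {d : W}
    (hd : ∀ u ∈ Subgroup.closure (cs.simple '' J), ∀ v ∈ Subgroup.closure (cs.simple '' K),
      cs.length d ≤ cs.length (u * d * v)) :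
    Subgroup.closure (cs.simple '' J) ⊓ conjSub d (Subgroup.closure (cs.simple '' K)) =
      Subgroup.closure (cs.simple '' {i ∈ J | d⁻¹ * cs.simple i * d ∈ cs.simple '' K}) := by
  set L : Set B := {i ∈ J | d⁻¹ * cs.simple i * d ∈ cs.simple '' K} with hL
  have hd1 : ∀ u ∈ Subgroup.closure (cs.simple '' J),
      cs.length d ≤ cs.length (u * d) := by
    intro u hu
    have := hd u hu 1 (one_mem _)
    simpa using this
  have hd2 : ∀ v ∈ Subgroup.closure (cs.simple '' K),
      cs.length d ≤ cs.length (d * v) := by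
    intro v hv
    have := hd 1 (one_mem _) v hv
    simpa using this
  have addL := length_min_coset cs J hd1
  have addR := length_min_coset_right cs K hd2
  apply _root_.le_antisymm
  · intro w hw
    rw [Subgroup.mem_inf] at hw
    have main : ∀ n, ∀ w : W, w ∈ Subgroup.closure (cs.simple '' J) →
        d⁻¹ * w * d ∈ Subgroup.closure (cs.simple '' K) → cs.length w = n →
        w ∈ Subgroup.closure (cs.simple '' L) := by
      intro n
      induction n using Nat.strong_induction_on with
      | _ n ih =>
        intro w hwJ hwK hwn
        by_cases hw1 : w = 1
        · subst hw1; exact one_mem _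
        · obtain ⟨i, hiJ, hx'J, hlen⟩ := exists_simple_left_descent cs J hwJ hw1
          set x' := cs.simple i * w with hx'
          have hw_eq : w = cs.simple i * x' := by
            rw [hx', cs.simple_mul_simple_cancel_left]
          set u := d⁻¹ * w * d with hu
          have h1 : cs.length (x' * d) = cs.length x' + cs.length d := addL x' hx'J
          have h2 : cs.length (w * d) = cs.length w + cs.length d := addL w hwJ
          have hdu : d * u = w * d := by rw [hu]; group
          obtain ⟨δ, hδred, hδeq⟩ := cs.exists_reduced_word' d
          obtain ⟨υ, hυred, hυmem, hυeq⟩ := exists_reduced_J_word cs K hwK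
          have hδlen : δ.length = cs.length d := by
            have := hδred; unfold CoxeterSystem.IsReduced at this; rw [← hδeq] at this
            omega
          have hυlen : υ.length = cs.length u := by
            have := hυred; unfold CoxeterSystem.IsReduced at this; rw [hυeq] at this
            omega
          have hω : cs.wordProd (δ ++ υ) = d * u := by
            rw [cs.wordProd_append, ← hδeq, hυeq, hu]
          have hωred : cs.IsReduced (δ ++ υ) := by
            unfold CoxeterSystem.IsReduced
            rw [hω, addR u hwK, List.length_append]
            omega
          have hlt : cs.length (cs.simple i * cs.wordProd (δ ++ υ))
              < cs.length (cs.wordProd (δ ++ υ)) := by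
            rw [hω, hdu]
            have e : cs.simple i * (w * d) = x' * d := by rw [hx']; group
            rw [e, h1, h2]
            omega
          obtain ⟨k, hk, hkeq⟩ := exchange_left cs hωred (cs.isReflection_simple i) hlt
          rw [hω] at hkeq
          by_cases hkδ : k < δ.length
          · exfalso
            rw [List.eraseIdx_append_of_lt_length hkδ, cs.wordProd_append, hυeq] at hkeq
            have hsd : cs.simple i * d = cs.wordProd (δ.eraseIdx k) := by
              have h3 := hkeq
              rw [← mul_assoc] at h3
              exact mul_right_cancel h3
            have hle : cs.length (cs.simple i * d) ≤ (δ.eraseIdx k).length :=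
              hsd ▸ cs.length_wordProd_le _
            rw [List.length_eraseIdx_of_lt hkδ] at hle
            have hge := hd1 (cs.simple i) (Subgroup.subset_closure ⟨i, hiJ, rfl⟩)
            omega
          · push_neg at hkδ
            rw [List.eraseIdx_append_of_length_le hkδ, cs.wordProd_append, ← hδeq] at hkeq
            set v := d⁻¹ * cs.simple i * d with hv
            have hveq : v = cs.wordProd (υ.eraseIdx (k - δ.length)) * u⁻¹ := by
              calc v = d⁻¹ * (cs.simple i * (d * u)) * u⁻¹ := by rw [hv]; group
                _ = d⁻¹ * (d * cs.wordProd (υ.eraseIdx (k - δ.length))) * u⁻¹ := by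
                    rw [hkeq]
                _ = _ := by group
            have hvK : v ∈ Subgroup.closure (cs.simple '' K) := by
              rw [hveq]
              exact mul_mem (wordProd_mem cs K
                (fun b hb => hυmem b (List.mem_of_mem_eraseIdx hb))) (inv_mem hwK)
            have hdv : d * v = cs.simple i * d := by rw [hv]; group
            have h3 : cs.length (d * v) = cs.length d + cs.length v := addR v hvK
            have h4 : cs.length (cs.simple i * d) ≤ cs.length d + 1 := by
              rcases cs.length_simple_mul d i with h | h <;> omega
            have hv1 : cs.length v = 1 := by
              have hvne : cs.length v ≠ 0 := by
                intro h0
                rw [cs.length_eq_zero_iff] at h0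
                rw [h0, mul_one] at hdv
                have hcancel : cs.simple i = 1 := by
                  have h5 : cs.simple i * d = 1 * d := by rw [← hdv, one_mul]
                  exact mul_right_cancel h5
                have hls := cs.length_simple i
                rw [hcancel, cs.length_one] at hls
                omega
              rw [hdv] at h3
              omega
            have hvK' : v ∈ cs.simple '' K := eq_simple_of_length_one cs K hvK hv1
            have hiL : i ∈ L := ⟨hiJ, by rw [← hv]; exact hvK'⟩
            have hx'K : d⁻¹ * x' * d ∈ Subgroup.closure (cs.simple '' K) := by
              have e : d⁻¹ * x' * d = v * u := by rw [hx', hv, hu]; group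
              rw [e]
              exact mul_mem hvK hwK
            have hx'L := ih (cs.length x') (by omega) x' hx'J hx'K rfl
            rw [hw_eq]
            exact mul_mem (Subgroup.subset_closure ⟨i, hiL, rfl⟩) hx'L
    exact main (cs.length w) w hw.1 (mem_conjSub.mp hw.2) rfl
  · rw [Subgroup.closure_le]
    rintro x ⟨i, ⟨hiJ, hiK⟩, rfl⟩
    rw [SetLike.mem_coe, Subgroup.mem_inf]
    exact ⟨Subgroup.subset_closure ⟨i, hiJ, rfl⟩,
      mem_conjSub.mpr (Subgroup.subset_closure hiK)⟩

theorem exists_min_rep (J K : Set B) (w : W) :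
    ∃ d u v : W, u ∈ Subgroup.closure (cs.simple '' J) ∧
      v ∈ Subgroup.closure (cs.simple '' K) ∧ d = u * w * v ∧
      ∀ u' ∈ Subgroup.closure (cs.simple '' J), ∀ v' ∈ Subgroup.closure (cs.simple '' K),
        cs.length d ≤ cs.length (u' * d * v') := by
  set S : Set ℕ := {n | ∃ u v : W, u ∈ Subgroup.closure (cs.simple '' J) ∧
    v ∈ Subgroup.closure (cs.simple '' K) ∧ cs.length (u * w * v) = n} with hS
  have hne : S.Nonempty := ⟨cs.length w, 1, 1, one_mem _, one_mem _, by simp⟩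
  obtain ⟨u, v, hu, hv, hlen⟩ := Nat.sInf_mem hne
  refine ⟨u * w * v, u, v, hu, hv, rfl, ?_⟩
  intro u' hu' v' hv'
  rw [hlen]
  apply Nat.sInf_le
  refine ⟨u' * u, v * v', mul_mem hu' hu, mul_mem hv hv', ?_⟩
  congr 1
  group

end CoxAux
end aux

/-- For a finite Coxeter group `W` with Coxeter system `(W,S)`, the set of all parabolic
subgroups of `W` is a collection of `W`: it contains `W`, is closed under conjugation, and
the intersection of two parabolic subgroups is parabolic. -/
theorem parabolics_isCollection {B W : Type*} [Group W] [Finite W] {M : CoxeterMatrix B}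
    (cs : CoxeterSystem M W) :
    IsCollection (parabolics cs) := by
  refine ⟨?_, ?_, ?_⟩
  · refine ⟨Set.univ, 1, ?_⟩
    rw [CoxAux.conjSub_one, Set.image_univ, cs.subgroup_closure_range_simple]
  · rintro H ⟨J, g, rfl⟩ H' ⟨K, h, rfl⟩
    obtain ⟨d, u₀, v₀, hu₀, hv₀, hdef, hmin⟩ := CoxAux.exists_min_rep cs J K (g⁻¹ * h)
    have hwk : g⁻¹ * h = u₀⁻¹ * d * v₀⁻¹ := by rw [hdef]; group
    refine ⟨{i ∈ J | d⁻¹ * cs.simple i * d ∈ cs.simple '' K}, g * u₀⁻¹, ?_⟩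
    have step1 : conjSub g (Subgroup.closure (cs.simple '' J))
        ⊓ conjSub h (Subgroup.closure (cs.simple '' K))
        = conjSub g (Subgroup.closure (cs.simple '' J)
            ⊓ conjSub (g⁻¹ * h) (Subgroup.closure (cs.simple '' K))) := by
      rw [CoxAux.conjSub_inf, CoxAux.conjSub_conjSub, mul_inv_cancel_left]
    have step2 : conjSub (g⁻¹ * h) (Subgroup.closure (cs.simple '' K))
        = conjSub u₀⁻¹ (conjSub d (Subgroup.closure (cs.simple '' K))) := by
      rw [hwk, ← CoxAux.conjSub_conjSub (u₀⁻¹ * d) v₀⁻¹,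
        CoxAux.conjSub_of_mem (inv_mem hv₀), ← CoxAux.conjSub_conjSub]
    have step3 : Subgroup.closure (cs.simple '' J)
        ⊓ conjSub u₀⁻¹ (conjSub d (Subgroup.closure (cs.simple '' K)))
        = conjSub u₀⁻¹ (Subgroup.closure (cs.simple '' J)
            ⊓ conjSub d (Subgroup.closure (cs.simple '' K))) := by
      rw [CoxAux.conjSub_inf, CoxAux.conjSub_of_mem (inv_mem hu₀)]
    rw [step1, step2, step3, CoxAux.kilmoyer cs J K hmin, CoxAux.conjSub_conjSub]
  · rintro H ⟨J, g, rfl⟩ g'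
    exact ⟨J, g' * g, by rw [CoxAux.conjSub_conjSub]⟩
end

section
/- Let (W,S) be a reducible finite Coxeter system with W = ∏_{i=1}^ℓ W_i and S = ⊔ S_i for irreducible Coxeter systems (W_i,S_i). Then the sign unit satisfies ε_W = ∏_{i=1}^ℓ f_i(ε_{W_i}) in B(W,P_W), where f_i : B(W_i,P_{W_i}) → B(W,P_W) is the canonical injective ring homomorphism [W_i/H] ↦ [W/(W₁ × ⋯ × H × ⋯ × W_ℓ)]. -/
open MulAction

/-- The sign element `ε_W = Σ_{J ⊆ S} (-1)^{|J|} [W/⟨J⟩]` of a finite Coxeter system, as a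
mark vector. -/
noncomputable def signUnitFun {B W : Type*} [Group W] [Fintype B] {M : CoxeterMatrix B}
    (cs : CoxeterSystem M W) : Subgroup W → ℤ :=
  ∑ J : Finset B, ((-1 : ℤ) ^ J.card) • mark W (Subgroup.closure (cs.simple '' (J : Set B)))

/-- A Coxeter matrix (equivalently, its Coxeter system) is irreducible if the index set
admits no partition into two nonempty parts that pairwise commute (entry `2`). -/
def CoxeterMatrix.IsIrreducible {B : Type*} (M : CoxeterMatrix B) : Prop :=
  ∀ J : Set B, (∀ j ∈ J, ∀ k ∉ J, M j k = 2) → J = ∅ ∨ J = Set.univ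

lemma conjSub_one {G : Type*} [Group G] (H : Subgroup G) : conjSub 1 H = H := by
  ext x; simp [conjSub]

def quotMapLe {G : Type*} [Group G] {H K : Subgroup G} (h : H ≤ K) : G ⧸ H → G ⧸ K :=
  Quotient.map' id (fun a b hab => by
    rw [QuotientGroup.leftRel_apply] at *
    exact h hab)

lemma quotMapLe_mk {G : Type*} [Group G] {H K : Subgroup G} (h : H ≤ K) (g : G) :
    quotMapLe h (QuotientGroup.mk g) = QuotientGroup.mk g := rfl

lemma quotMapLe_smul {G : Type*} [Group G] {H K : Subgroup G} (h : H ≤ K) {K' : Subgroup G}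
    (k : K') (x : G ⧸ H) : quotMapLe h (k • x) = k • quotMapLe h x := by
  induction x using Quotient.inductionOn'
  rfl

section Pi
variable {ι : Type*} [Fintype ι] [DecidableEq ι] {G : ι → Type*} [∀ i, Group (G i)]
  (H : ∀ i, Subgroup (G i))

lemma piSubgroup_le (i : ι) :
    piSubgroup H ≤ piSubgroup (Function.update (fun j => (⊤ : Subgroup (G j))) i (H i)) := by
  intro x hx j _
  rcases eq_or_ne j i with rfl | hne
  · simpa using hx j (Set.mem_univ j)
  · simp [Function.update_apply, hne]

lemma piQuot_inj {x y : (∀ i, G i) ⧸ piSubgroup H}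
    (h : ∀ i, quotMapLe (piSubgroup_le H i) x = quotMapLe (piSubgroup_le H i) y) :
    x = y := by
  induction x using Quotient.inductionOn' with | h a =>
  induction y using Quotient.inductionOn' with | h b =>
  apply Quotient.sound'
  rw [QuotientGroup.leftRel_apply]
  intro i _
  have hi := h i
  rw [show (Quotient.mk'' a : (∀ i, G i) ⧸ piSubgroup H) = QuotientGroup.mk a from rfl] at hi
  rw [show (Quotient.mk'' b : (∀ i, G i) ⧸ piSubgroup H) = QuotientGroup.mk b from rfl] at hi
  rw [quotMapLe_mk, quotMapLe_mk, QuotientGroup.eq] at hi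
  have := hi i (Set.mem_univ i)
  simpa using this

noncomputable def fixedPiEquiv (K : Subgroup (∀ i, G i)) :
    fixedPoints K ((∀ i, G i) ⧸ piSubgroup H) ≃
      ∀ i, fixedPoints K ((∀ i, G i) ⧸
        piSubgroup (Function.update (fun j => (⊤ : Subgroup (G j))) i (H i))) := by
  apply Equiv.ofBijective (fun x i => ⟨quotMapLe (piSubgroup_le H i) x.1, by
    intro k
    have hx := x.2 k
    rw [← quotMapLe_smul (piSubgroup_le H i) k x.1, hx]⟩)
  constructor
  · intro x y hxy
    apply Subtype.ext
    apply piQuot_inj H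
    intro i
    exact congrArg Subtype.val (congrFun hxy i)
  · intro y
    set g : ∀ i, G i := fun i => (Quotient.out (y i).val) i with hg
    have hkey : ∀ i, quotMapLe (piSubgroup_le H i) (QuotientGroup.mk g) = (y i).val := by
      intro i
      rw [quotMapLe_mk]
      have hout : (QuotientGroup.mk (Quotient.out (y i).val)) = (y i).val :=
        QuotientGroup.out_eq' _
      rw [← hout, QuotientGroup.eq]
      intro j _
      rcases eq_or_ne j i with rfl | hne
      · simpa [hg] using (H j).one_mem
      · simp [Function.update_apply, hne]
    have hfix : (QuotientGroup.mk g : (∀ i, G i) ⧸ piSubgroup H) ∈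
        fixedPoints K ((∀ i, G i) ⧸ piSubgroup H) := by
      intro k
      apply piQuot_inj H
      intro i
      rw [quotMapLe_smul (piSubgroup_le H i) k, hkey]
      have h2 := (y i).2 k
      rw [h2]
    refine ⟨⟨QuotientGroup.mk g, hfix⟩, ?_⟩
    funext i
    exact Subtype.ext (hkey i)

lemma mark_piSubgroup (K : Subgroup (∀ i, G i)) :
    mark (∀ i, G i) (piSubgroup H) K =
      ∏ i, mark (∀ i, G i)
        (piSubgroup (Function.update (fun j => (⊤ : Subgroup (G j))) i (H i))) K := by
  unfold mark
  rw [Nat.card_congr (fixedPiEquiv H K), Nat.card_pi]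
  push_cast
  rfl

lemma closure_pi (T : ∀ i, Set (G i)) :
    Subgroup.closure (⋃ i, Pi.mulSingle i '' T i) =
      piSubgroup (fun i => Subgroup.closure (T i)) := by
  apply le_antisymm
  · rw [Subgroup.closure_le]
    rintro x hx
    rw [Set.mem_iUnion] at hx
    obtain ⟨i, y, hy, rfl⟩ := hx
    intro j _
    rcases eq_or_ne j i with rfl | hne
    · simpa using Subgroup.subset_closure hy
    · simp [Pi.mulSingle, Function.update_apply, hne, Subgroup.one_mem]
  · intro x hx
    rw [← Finset.noncommProd_mulSingle x]
    apply Subgroup.noncommProd_mem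
    intro i _
    have hxi : x i ∈ Subgroup.closure (T i) := hx i (Set.mem_univ i)
    have h1 : Pi.mulSingle i (x i) ∈ (Subgroup.closure (T i)).map (MonoidHom.mulSingle G i) :=
      Subgroup.mem_map_of_mem _ hxi
    rw [MonoidHom.map_closure] at h1
    refine Subgroup.closure_mono ?_ h1
    exact Set.subset_iUnion (fun i => Pi.mulSingle i '' T i) i

end Pi

lemma sigma_finset_bij {ι : Type*} [Fintype ι] {B : ι → Type*} :
    Function.Bijective (fun t : ∀ i, Finset (B i) => Finset.univ.sigma t) := by
  classical
  constructor
  · intro t s h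
    funext i; ext b
    have := Finset.ext_iff.mp h ⟨i, b⟩
    simpa [Finset.mem_sigma] using this
  · intro J
    refine ⟨fun i => J.preimage (Sigma.mk i) sigma_mk_injective.injOn, ?_⟩
    ext ⟨i, b⟩
    simp [Finset.mem_sigma, Finset.mem_preimage]

set_option synthInstance.maxHeartbeats 1000000 in
/-- Let `(W,S)` be a reducible finite Coxeter system with `W = ∏ᵢ Wᵢ`, `S = ⊔ᵢ Sᵢ` for
irreducible Coxeter systems `(Wᵢ,Sᵢ)`.  Then the sign unit satisfies
`ε_W = ∏ᵢ fᵢ(ε_{Wᵢ})` in `B(W,P_W)`, where `fᵢ : B(Wᵢ,P_{Wᵢ}) → B(W,P_W)` is the canonical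
injective ring homomorphism `[Wᵢ/H] ↦ [W/(W₁ × ⋯ × H × ⋯ × W_ℓ)]`. -/
theorem sign_unit_prod {ℓ : ℕ} (hℓ : 2 ≤ ℓ) (W : Fin ℓ → Type*)
    [∀ i, Group (W i)] [∀ i, Finite (W i)] (B : Fin ℓ → Type*) [∀ i, Fintype (B i)]
    (M : ∀ i, CoxeterMatrix (B i)) (cs' : ∀ i, CoxeterSystem (M i) (W i))
    (hirr : ∀ i, (M i).IsIrreducible)
    (M' : CoxeterMatrix (Σ i, B i)) (cs : CoxeterSystem M' (∀ i, W i))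
    (hsimple : ∀ (i : Fin ℓ) (b : B i),
      cs.simple ⟨i, b⟩ = Pi.mulSingle i ((cs' i).simple b))
    (f : ∀ i, pbr (W i) (parabolics (cs' i)) →+* pbr (∀ j, W j) (parabolics cs))
    (hinj : ∀ i, Function.Injective (f i))
    (hf : ∀ (i : Fin ℓ) (x : pbr (W i) (parabolics (cs' i))) (H : Subgroup (W i)),
      H ∈ parabolics (cs' i) → (x : Subgroup (W i) → ℤ) = mark (W i) H →
      ((f i x : pbr (∀ j, W j) (parabolics cs)) : Subgroup (∀ j, W j) → ℤ) =
        mark (∀ j, W j) (piSubgroup (Function.update (fun j => (⊤ : Subgroup (W j))) i H)))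
    (ε : ∀ i, pbr (W i) (parabolics (cs' i)))
    (hε : ∀ i, ((ε i : pbr (W i) (parabolics (cs' i))) : Subgroup (W i) → ℤ) =
      signUnitFun (cs' i)) :
    (((∏ i, f i (ε i) : pbr (∀ j, W j) (parabolics cs))) : Subgroup (∀ j, W j) → ℤ) =
      signUnitFun cs := by
  classical
  have hm : ∀ (i : Fin ℓ) (J : Finset (B i)),
      mark (W i) (Subgroup.closure ((cs' i).simple '' (J : Set (B i)))) ∈
        pbr (W i) (parabolics (cs' i)) :=
    fun i J => Subring.subset_closure
      ⟨_, ⟨(J : Set (B i)), (1 : W i), (conjSub_one _).symm⟩, rfl⟩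
  have hεdec : ∀ i, ε i = ∑ J : Finset (B i), ((-1 : ℤ) ^ J.card) •
      (⟨mark (W i) (Subgroup.closure ((cs' i).simple '' (J : Set (B i)))), hm i J⟩ :
        pbr (W i) (parabolics (cs' i))) := by
    intro i
    apply Subtype.ext
    rw [hε i, AddSubmonoidClass.coe_finset_sum]
    rfl
  have hfd : ∀ i, ((f i (ε i) : pbr (∀ j, W j) (parabolics cs)) : Subgroup (∀ j, W j) → ℤ)
      = ∑ J : Finset (B i), ((-1 : ℤ) ^ J.card) •
          mark (∀ j, W j) (piSubgroup (Function.update (fun j => (⊤ : Subgroup (W j))) i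
            (Subgroup.closure ((cs' i).simple '' (J : Set (B i)))))) := by
    intro i
    rw [hεdec i, map_sum, AddSubmonoidClass.coe_finset_sum]
    apply Finset.sum_congr rfl
    intro J _
    rw [map_zsmul]
    have : ((((-1 : ℤ) ^ J.card • f i ⟨_, hm i J⟩ : pbr (∀ j, W j) (parabolics cs))) :
        Subgroup (∀ j, W j) → ℤ) = ((-1 : ℤ) ^ J.card) •
        ((f i ⟨_, hm i J⟩ : pbr (∀ j, W j) (parabolics cs)) : Subgroup (∀ j, W j) → ℤ) := rfl
    rw [this, hf i _ _ ⟨(J : Set (B i)), (1 : W i), (conjSub_one _).symm⟩ rfl]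
  have hprod : (((∏ i, f i (ε i) : pbr (∀ j, W j) (parabolics cs))) :
      Subgroup (∀ j, W j) → ℤ)
      = ∏ i, ((f i (ε i) : pbr (∀ j, W j) (parabolics cs)) : Subgroup (∀ j, W j) → ℤ) :=
    SubmonoidClass.coe_finset_prod _ _
  rw [hprod]
  simp only [hfd]
  rw [Finset.prod_univ_sum]
  have hre : signUnitFun cs = ∑ t : ∀ i, Finset (B i),
      ((-1 : ℤ) ^ (Finset.univ.sigma t).card) •
      mark (∀ j, W j) (Subgroup.closure (cs.simple ''
        ((Finset.univ.sigma t : Finset (Σ i, B i)) : Set (Σ i, B i)))) :=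
    (Fintype.sum_bijective _ sigma_finset_bij _ _ (fun t => rfl)).symm
  rw [hre]
  apply Finset.sum_congr rfl
  intro t _
  have hgen : cs.simple '' ((Finset.univ.sigma t : Finset (Σ i, B i)) : Set (Σ i, B i))
      = ⋃ i, Pi.mulSingle i '' ((cs' i).simple '' ((t i : Set (B i)))) := by
    ext x
    constructor
    · rintro ⟨⟨i, b⟩, hb, rfl⟩
      rw [Finset.mem_coe, Finset.mem_sigma] at hb
      exact Set.mem_iUnion.mpr ⟨i, ⟨(cs' i).simple b, ⟨b, hb.2, rfl⟩, (hsimple i b).symm⟩⟩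
    · intro hx
      obtain ⟨i, y, ⟨b, hb, rfl⟩, rfl⟩ := Set.mem_iUnion.mp hx
      exact ⟨⟨i, b⟩, by
        rw [Finset.mem_coe, Finset.mem_sigma]
        exact ⟨Finset.mem_univ _, hb⟩, hsimple i b⟩
  rw [hgen, closure_pi, Finset.card_sigma]
  funext K
  simp only [Finset.prod_apply, Pi.smul_apply, smul_eq_mul]
  rw [mark_piSubgroup, Finset.prod_mul_distrib, Finset.prod_pow_eq_pow_sum]
end
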